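/- arXiv:2603.27382 — 7 statements merged into one kernel-verified Lean document; each statement's English description precedes it below -/
import Mathlib

section
/- Let x, v : [0,∞) → E be continuously differentiable curves with ‖x(t)‖ = 1 for all t ≥ 0, satisfying the closed-loop system x'(t) = P(x(t)) v(t) and v'(t) = -k·b(d(x(t))) • (v(t) - ν(x(t))) + (Dν(x(t)))(P(x(t)) v(t)), where k > 0 and Dν denotes the Fréchet derivative of ν. Assume: (i) d is continuous on the unit sphere, with d(y) differentiable at every unit y with 0 < d(y) ≤ δ_u and the chain rule holds along the curve, i.e. (d∘x)'(t) = ⟪∇d(x(t)), x'(t)⟫ whenever 0 < d(x(t)) ≤ δ_u; (ii) ‖P(y) ∇d(y)‖ ≤ D_d for every unit y with 0 < d(y) ≤ δ_u; (iii) ⟪∇d(y), ν(y)⟫ ≥ μ for every unit y with 0 < d(y) ≤ δ_d; (iv) ⟪y, ν(y)⟫ = 0 and ‖ν(y)‖ ≤ D₁ for every unit y with d(y) > 0; (v) b(s) = 1/s for all s ∈ (0, ε₁] and b(s) > 0 for all s > 0, where 0 < ε₁ < δ_u; (vi) ν is differentiable at x(t) for every t ≥ 0. If d(x(0)) > 0,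 then d(x(t)) > 0 for all t ≥ 0. -/
open scoped RealInnerProductSpace

/-- Orthogonal projection onto the tangent space of the unit sphere at `x`:
`P(x) v = v - ⟪x, v⟫ • x`. -/
noncomputable def sproj {F : Type*} [NormedAddCommGroup F] [InnerProductSpace ℝ F]
    (x v : F) : F :=
  v - ⟪x, v⟫ • x

/-!
Near `{d = 0}` the damping is `b(d) = 1/d`, so the velocity error `e = v - ν(x)` obeys
`e' = -(k/d) e`. Along the flow `d' = ⟪∇d, ν⟫ + ⟪P ∇d, e⟫ ≥ μ - D_d ‖e‖`, and the loss
`D_d ‖e‖` is paid for by the decay of `‖e‖`: the product `d · exp (-(D_d/k) ‖e‖)` (suitably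
regularised where `e = 0`) is nondecreasing. So `d` stays bounded below by a positive constant
on every approach to `{d = 0}`, and the first time with `d ≤ 0` cannot exist.
-/

open Set Filter Topology Real

theorem sub_sq_div_sqrt_sq_add_sq_le {r s : ℝ} (hr : 0 ≤ r) (hs : 0 < s) :
    r - r ^ 2 / √(r ^ 2 + s ^ 2) ≤ s := by
  have hg : 0 < √(r ^ 2 + s ^ 2) := sqrt_pos.2 (by positivity)
  have hrg : r ≤ √(r ^ 2 + s ^ 2) := le_sqrt_of_sq_le (by nlinarith)
  have hgrs : √(r ^ 2 + s ^ 2) ≤ r + s := (sqrt_le_left (by positivity)).2 (by nlinarith)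
  rw [sub_le_iff_le_add, ← sub_le_iff_le_add', le_div_iff₀ hg]
  nlinarith

theorem pos_of_barrier {φ : ℝ → ℝ} {c : ℝ} (hφ : ContinuousOn φ (Ici 0)) (h0 : 0 < φ 0)
    (hc : 0 < c)
    (hbarrier : ∀ a b, 0 ≤ a → a < b → 0 < φ a → (∀ t ∈ Ioo a b, 0 < φ t ∧ φ t < c) → 0 < φ b)
    (t : ℝ) (ht : 0 ≤ t) : 0 < φ t := by
  by_contra! hT
  set S := Icc 0 t ∩ φ ⁻¹' Iic 0
  have hS : IsClosed S :=
    (hφ.mono Icc_subset_Ici_self).preimage_isClosed_of_isClosed isClosed_Icc isClosed_Iic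
  have hbdd : BddBelow S := ⟨0, fun s hs => hs.1.1⟩
  obtain ⟨⟨ht₁0, ht₁t⟩, ht₁⟩ : sInf S ∈ S := hS.csInf_mem ⟨t, ⟨ht, le_rfl⟩, hT⟩ hbdd
  set t₁ := sInf S
  have hbefore : ∀ s, 0 ≤ s → s < t₁ → 0 < φ s := fun s hs hst =>
    lt_of_not_ge fun hφs => (csInf_le hbdd ⟨⟨hs, hst.le.trans ht₁t⟩, hφs⟩).not_gt hst
  have ht₁pos : 0 < t₁ := ht₁0.lt_of_ne fun h => h0.not_ge (h ▸ ht₁)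
  have hnear : ∀ᶠ s in 𝓝[<] t₁, φ s < c :=
    nhdsWithin_le_nhds <| (hφ.continuousAt (Ici_mem_nhds ht₁pos)).eventually
      (gt_mem_nhds (ht₁.trans_lt hc))
  obtain ⟨l, hlt₁, hl⟩ := mem_nhdsLT_iff_exists_Ioo_subset.1 hnear
  have ha : max l 0 < t₁ := max_lt hlt₁ ht₁pos
  refine (hbarrier (max l 0) t₁ (le_max_right _ _) ha
    (hbefore _ (le_max_right _ _) ha) fun s hs => ⟨?_, ?_⟩).not_ge ht₁
  · exact hbefore s ((le_max_right _ _).trans hs.1.le) hs.2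
  · exact hl ⟨(le_max_left _ _).trans_lt hs.1, hs.2⟩

section InnerProductSpace

variable {E : Type*} [NormedAddCommGroup E] [InnerProductSpace ℝ E]

theorem inner_sproj_right (x u w : E) : ⟪u, sproj x w⟫ = ⟪sproj x u, w⟫ := by
  simp only [sproj, inner_sub_left, inner_sub_right, real_inner_smul_left,
    real_inner_smul_right, real_inner_comm x]
  ring

theorem sproj_add_of_inner_eq_zero {x y : E} (hxy : ⟪x, y⟫ = 0) (w : E) :
    sproj x (y + w) = y + sproj x w := by
  simp only [sproj, inner_add_right, hxy, zero_add]
  abel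

theorem sub_mul_norm_sub_le_inner_sproj {x y w g : E} {μ D : ℝ} (hxy : ⟪x, y⟫ = 0)
    (hg : ‖sproj x g‖ ≤ D) (hμ : μ ≤ ⟪g, y⟫) : μ - D * ‖w - y‖ ≤ ⟪g, sproj x w⟫ := by
  have hsplit : ⟪g, sproj x w⟫ = ⟪g, y⟫ + ⟪sproj x g, w - y⟫ := by
    rw [← inner_sproj_right, ← inner_add_right, ← sproj_add_of_inner_eq_zero hxy,
      add_sub_cancel]
  have hcs : -(D * ‖w - y‖) ≤ ⟪sproj x g, w - y⟫ :=
    calc -(D * ‖w - y‖) ≤ -(‖sproj x g‖ * ‖w - y‖) := by gcongr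
      _ ≤ ⟪sproj x g, w - y⟫ := neg_le_of_abs_le (abs_real_inner_le_norm _ _)
  linarith

theorem hasDerivAt_mul_exp_neg_sqrt {φ : ℝ → ℝ} {e : ℝ → E} {φ' k D ε t : ℝ} (hε : 0 < ε)
    (hk : k ≠ 0) (hφt : φ t ≠ 0) (hφ : HasDerivAt φ φ' t)
    (he : HasDerivAt e (-(k / φ t) • e t) t) :
    HasDerivAt (fun s => φ s * exp (-(D / k) * √(‖e s‖ ^ 2 + ε)))
      (exp (-(D / k) * √(‖e t‖ ^ 2 + ε)) * (φ' + D * ‖e t‖ ^ 2 / √(‖e t‖ ^ 2 + ε))) t := by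
  have hg : 0 < √(‖e t‖ ^ 2 + ε) := sqrt_pos.2 (by positivity)
  refine (hφ.mul (((he.norm_sq.add_const ε).sqrt (by positivity)).const_mul (-(D / k))).exp
    ).congr_deriv ?_
  rw [real_inner_smul_right, real_inner_self_eq_norm_sq]
  field_simp

/-- Along `e' = -(k / φ) e`, the function `φ · exp (-(D/k) √(‖e‖² + (μ/D)²))` is nondecreasing
as long as `φ' ≥ μ - D ‖e‖`; the regularisation `(μ/D)²` costs at most `μ`. -/
theorem pos_of_lyapunov {φ φ' : ℝ → ℝ} {e : ℝ → E} {a b μ D k : ℝ} (hab : a ≤ b)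
    (hμ : 0 < μ) (hD : 0 < D) (hk : 0 < k)
    (hφc : ContinuousOn φ (Icc a b)) (hec : ContinuousOn e (Icc a b))
    (hφ : ∀ t ∈ Ioo a b, HasDerivAt φ (φ' t) t) (hφ' : ∀ t ∈ Ioo a b, μ - D * ‖e t‖ ≤ φ' t)
    (hne : ∀ t ∈ Ioo a b, φ t ≠ 0) (he : ∀ t ∈ Ioo a b, HasDerivAt e (-(k / φ t) • e t) t)
    (ha : 0 < φ a) : 0 < φ b := by
  set g : ℝ → ℝ := fun s => √(‖e s‖ ^ 2 + (μ / D) ^ 2)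
  have hmono : MonotoneOn (fun s => φ s * exp (-(D / k) * g s)) (Icc a b) := by
    refine monotoneOn_of_hasDerivWithinAt_nonneg (convex_Icc a b) (hφc.mul (by fun_prop))
      (f' := fun t => exp (-(D / k) * g t) * (φ' t + D * ‖e t‖ ^ 2 / g t))
      (fun t ht => ?_) (fun t ht => ?_)
    · rw [interior_Icc] at ht ⊢
      exact (hasDerivAt_mul_exp_neg_sqrt (by positivity) hk.ne' (hne t ht) (hφ t ht)
        (he t ht)).hasDerivWithinAt
    · rw [interior_Icc] at ht
      have hlow : D * (‖e t‖ - ‖e t‖ ^ 2 / g t) ≤ μ := by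
        have := sub_sq_div_sqrt_sq_add_sq_le (norm_nonneg (e t)) (div_pos hμ hD)
        rwa [le_div_iff₀' hD] at this
      rw [mul_sub, ← mul_div_assoc] at hlow
      exact mul_nonneg (exp_pos _).le (by linarith [hφ' t ht])
  have := hmono (left_mem_Icc.2 hab) (right_mem_Icc.2 hab) hab
  exact pos_of_mul_pos_left ((mul_pos ha (exp_pos _)).trans_le this) (exp_pos _).le

end InnerProductSpace

theorem safety_claim1_general
    (n : ℕ)
    (d : EuclideanSpace ℝ (Fin (n+1)) → ℝ)
    (ν : EuclideanSpace ℝ (Fin (n+1)) → EuclideanSpace ℝ (Fin (n+1)))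
    (b : ℝ → ℝ)
    (μ D_d δ_d δ_u ε₁ k : ℝ)
    (hμ : 0 < μ) (hDd : 0 < D_d)
    (hδd : 0 < δ_d) (hδdu : δ_d ≤ δ_u) (hε₁ : 0 < ε₁)
    (hk : 0 < k)
    (x v : ℝ → EuclideanSpace ℝ (Fin (n+1)))
    -- x evolves on the unit sphere
    (hx_sphere : ∀ t : ℝ, 0 ≤ t → ‖x t‖ = 1)
    -- closed-loop dynamics: x' = P(x) v
    (hx_ode : ∀ t : ℝ, 0 ≤ t → HasDerivAt x (sproj (x t) (v t)) t)
    -- v' = -k b(d(x)) (v - ν(x)) + Dν(x) (P(x) v)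
    (hv_ode : ∀ t : ℝ, 0 ≤ t →
      HasDerivAt v
        (-(k * b (d (x t))) • (v t - ν (x t)) +
          fderiv ℝ ν (x t) (sproj (x t) (v t))) t)
    -- (i) d continuous on the unit sphere, differentiable near the unsafe set,
    -- and chain rule along the curve
    (hd_cont : ContinuousOn d (Metric.sphere (0 : EuclideanSpace ℝ (Fin (n+1))) 1))
    (hd_chain : ∀ t : ℝ, 0 ≤ t → 0 < d (x t) → d (x t) ≤ δ_u →
      HasDerivAt (fun s => d (x s)) ⟪gradient d (x t), sproj (x t) (v t)⟫ t)
    -- (ii) bounded projected gradient near the unsafe set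
    (hgrad_bdd : ∀ y : EuclideanSpace ℝ (Fin (n+1)), ‖y‖ = 1 →
      0 < d y → d y ≤ δ_u → ‖sproj y (gradient d y)‖ ≤ D_d)
    -- (iii) the desired vector field points away from the unsafe set
    (hmove : ∀ y : EuclideanSpace ℝ (Fin (n+1)), ‖y‖ = 1 →
      0 < d y → d y ≤ δ_d → μ ≤ ⟪gradient d y, ν y⟫)
    -- (iv) ν is tangent and bounded on the free space
    (hν_tangent : ∀ y : EuclideanSpace ℝ (Fin (n+1)), ‖y‖ = 1 → 0 < d y → ⟪y, ν y⟫ = 0)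
    -- (v) damping profile
    (hb_eq : ∀ s : ℝ, 0 < s → s ≤ ε₁ → b s = 1 / s)
    -- (vi) ν differentiable along the trajectory
    (hν_diff : ∀ t : ℝ, 0 ≤ t → DifferentiableAt ℝ ν (x t))
    -- initial condition in the free space
    (h0 : 0 < d (x 0)) :
    ∀ t : ℝ, 0 ≤ t → 0 < d (x t) := by
  set φ : ℝ → ℝ := fun t => d (x t)
  set e : ℝ → EuclideanSpace ℝ (Fin (n+1)) := fun t => v t - ν (x t)
  have hφ_cont : ContinuousOn φ (Ici 0) :=
    hd_cont.comp (fun t ht => (hx_ode t ht).continuousAt.continuousWithinAt)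
      fun t ht => mem_sphere_zero_iff_norm.2 (hx_sphere t ht)
  have he : ∀ t, 0 ≤ t → HasDerivAt e (-(k * b (φ t)) • e t) t := fun t ht => by
    have hνx := (hν_diff t ht).hasFDerivAt.comp_hasDerivAt t (hx_ode t ht)
    rw [← add_sub_cancel_right (-(k * b (φ t)) • e t) (fderiv ℝ ν (x t) (sproj (x t) (v t)))]
    exact (hv_ode t ht).sub hνx
  refine pos_of_barrier hφ_cont h0 (lt_min hε₁ hδd) fun a t₁ ha hat₁ hφa hband => ?_
  have hband_facts : ∀ s ∈ Ioo a t₁, 0 ≤ s ∧ ‖x s‖ = 1 ∧ 0 < φ s ∧ φ s ≤ ε₁ ∧ φ s ≤ δ_d := by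
    intro s hs
    obtain ⟨hpos, hlt⟩ := hband s hs
    have hs0 : 0 ≤ s := ha.trans hs.1.le
    exact ⟨hs0, hx_sphere s hs0, hpos, (lt_min_iff.1 hlt).1.le, (lt_min_iff.1 hlt).2.le⟩
  refine pos_of_lyapunov (φ' := fun s => ⟪gradient d (x s), sproj (x s) (v s)⟫) hat₁.le hμ hDd
    hk (hφ_cont.mono fun s hs => ha.trans hs.1)
    (fun s hs => (he s (ha.trans hs.1)).continuousAt.continuousWithinAt)
    (fun s hs => ?_) (fun s hs => ?_) (fun s hs => (hband s hs).1.ne') (fun s hs => ?_) hφa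
  all_goals obtain ⟨hs0, hxs, hpos, hε₁s, hδs⟩ := hband_facts s hs
  · exact hd_chain s hs0 hpos (hδs.trans hδdu)
  · exact sub_mul_norm_sub_le_inner_sproj (hν_tangent _ hxs hpos)
      (hgrad_bdd _ hxs hpos (hδs.trans hδdu)) (hmove _ hxs hpos hδs)
  · simpa only [hb_eq _ hpos hε₁s, mul_one_div] using he s hs0

/-- Claim 1 of Lemma 1 (safety): along closed-loop trajectories of the
second-order system on the sphere with dynamic damping, the separation
function stays strictly positive if it is initially strictly positive. -/
theorem safety_claim1
    (n : ℕ)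
    (d : EuclideanSpace ℝ (Fin (n+1)) → ℝ)
    (ν : EuclideanSpace ℝ (Fin (n+1)) → EuclideanSpace ℝ (Fin (n+1)))
    (b : ℝ → ℝ)
    (μ D_d D₁ δ_d δ_u ε₁ k : ℝ)
    (hμ : 0 < μ) (hDd : 0 < D_d) (hD₁ : 0 < D₁)
    (hδd : 0 < δ_d) (hδdu : δ_d ≤ δ_u) (hε₁ : 0 < ε₁) (hε₁u : ε₁ < δ_u)
    (hk : 0 < k)
    (x v : ℝ → EuclideanSpace ℝ (Fin (n+1)))
    -- x and v are continuously differentiable on [0, ∞)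
    (hx_smooth : ContDiffOn ℝ 1 x (Set.Ici (0:ℝ)))
    (hv_smooth : ContDiffOn ℝ 1 v (Set.Ici (0:ℝ)))
    -- x evolves on the unit sphere
    (hx_sphere : ∀ t : ℝ, 0 ≤ t → ‖x t‖ = 1)
    -- closed-loop dynamics: x' = P(x) v
    (hx_ode : ∀ t : ℝ, 0 ≤ t → HasDerivAt x (sproj (x t) (v t)) t)
    -- v' = -k b(d(x)) (v - ν(x)) + Dν(x) (P(x) v)
    (hv_ode : ∀ t : ℝ, 0 ≤ t →
      HasDerivAt v
        (-(k * b (d (x t))) • (v t - ν (x t)) +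
          fderiv ℝ ν (x t) (sproj (x t) (v t))) t)
    -- (i) d continuous on the unit sphere, differentiable near the unsafe set,
    -- and chain rule along the curve
    (hd_cont : ContinuousOn d (Metric.sphere (0 : EuclideanSpace ℝ (Fin (n+1))) 1))
    (hd_diff : ∀ y : EuclideanSpace ℝ (Fin (n+1)), ‖y‖ = 1 →
      0 < d y → d y ≤ δ_u → DifferentiableAt ℝ d y)
    (hd_chain : ∀ t : ℝ, 0 ≤ t → 0 < d (x t) → d (x t) ≤ δ_u →
      HasDerivAt (fun s => d (x s)) ⟪gradient d (x t), sproj (x t) (v t)⟫ t)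
    -- (ii) bounded projected gradient near the unsafe set
    (hgrad_bdd : ∀ y : EuclideanSpace ℝ (Fin (n+1)), ‖y‖ = 1 →
      0 < d y → d y ≤ δ_u → ‖sproj y (gradient d y)‖ ≤ D_d)
    -- (iii) the desired vector field points away from the unsafe set
    (hmove : ∀ y : EuclideanSpace ℝ (Fin (n+1)), ‖y‖ = 1 →
      0 < d y → d y ≤ δ_d → μ ≤ ⟪gradient d y, ν y⟫)
    -- (iv) ν is tangent and bounded on the free space
    (hν_tangent : ∀ y : EuclideanSpace ℝ (Fin (n+1)), ‖y‖ = 1 → 0 < d y → ⟪y, ν y⟫ = 0)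
    (hν_bdd : ∀ y : EuclideanSpace ℝ (Fin (n+1)), ‖y‖ = 1 → 0 < d y → ‖ν y‖ ≤ D₁)
    -- (v) damping profile
    (hb_eq : ∀ s : ℝ, 0 < s → s ≤ ε₁ → b s = 1 / s)
    (hb_pos : ∀ s : ℝ, 0 < s → 0 < b s)
    -- (vi) ν differentiable along the trajectory
    (hν_diff : ∀ t : ℝ, 0 ≤ t → DifferentiableAt ℝ ν (x t))
    -- initial condition in the free space
    (h0 : 0 < d (x 0)) :
    ∀ t : ℝ, 0 ≤ t → 0 < d (x t) :=
  safety_claim1_general n d ν b μ D_d δ_d δ_u ε₁ k hμ hDd hδd hδdu hε₁ hk x v hx_sphere hx_ode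
    hv_ode hd_cont hd_chain hgrad_bdd hmove hν_tangent hb_eq hν_diff h0
end

section
/- Let x, v : [0,∞) → E be continuously differentiable curves with ‖x(t)‖ = 1 for all t ≥ 0, satisfying x'(t) = P(x(t)) v(t) and v'(t) = -k·b(d(x(t))) • (v(t) - ν(x(t))) + (Dν(x(t)))(P(x(t)) v(t)) with k > 0, under the hypotheses: (i) d is continuous on the unit sphere and differentiable at every unit y with 0 < d(y) ≤ δ_u, with (d∘x)'(t) = ⟪∇d(x(t)), x'(t)⟫ whenever 0 < d(x(t)) ≤ δ_u; (ii) ‖P(y) ∇d(y)‖ ≤ D_d for every unit y with 0 < d(y) ≤ δ_u; (iii) ⟪∇d(y), ν(y)⟫ ≥ μ for every unit y with 0 < d(y) ≤ δ_d; (iv) ⟪y, ν(y)⟫ = 0 and ‖ν(y)‖ ≤ D₁ for every unit y with d(y) > 0; (v) b(s) = 1/s for s ∈ (0, ε₁] and b(s) ≥ 1 for all s > 0, where 0 < ε₁ < δ_u; (vi) ν is differentiable at x(t) for every t ≥ 0; (vii) d(x(0)) > 0. Then there exists a time T ≥ 0, depending on the initial condition (x(0), v(0)), such that d(x(t)) ≥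 δ_d for all t ≥ T. -/
/-!
The tracking error `e = v - ν ∘ x` obeys `e' = -k b(d ∘ x) e`, so `‖e‖` never grows, and near the
unsafe set `(d ∘ x)' ≥ μ - D_d ‖e‖`. Suppose `d ∘ x` first vanishes at `t₁`. Just before `t₁` the
damping is `k / d(x)` while `(d ∘ x)'` is bounded below, which makes `‖e‖ · d(x)^(-c)` nonincreasing
for a small `c > 0`; hence `e → 0` as `t → t₁`, so `d ∘ x` is increasing just before `t₁`, which is
absurd. Once `d ∘ x > 0` for all times, `b ≥ 1` gives `‖e t‖ ≤ ‖e 0‖ exp(-k t)`; from some `T₀` on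
`D_d ‖e‖ ≤ μ / 2`, so `d ∘ x` grows at rate at least `μ / 2` whenever it is below `δ_d`.
-/

open scoped RealInnerProductSpace

open Filter Topology Set

section Sproj

variable {F : Type*} [NormedAddCommGroup F] [InnerProductSpace ℝ F]

theorem inner_sproj_right_s1 (x g v : F) : ⟪g, sproj x v⟫ = ⟪sproj x g, v⟫ := by
  simp only [sproj, inner_sub_left, inner_sub_right, real_inner_smul_left, real_inner_smul_right]
  rw [real_inner_comm g x]
  ring

theorem sproj_of_inner_eq_zero {x w : F} (h : ⟪x, w⟫ = 0) : sproj x w = w := by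
  simp [sproj, h]

theorem inner_sub_mul_norm_le_inner_sproj {y g ν w : F} {D : ℝ} (hν : ⟪y, ν⟫ = 0)
    (hg : ‖sproj y g‖ ≤ D) : ⟪g, ν⟫ - D * ‖w - ν‖ ≤ ⟪g, sproj y w⟫ := by
  have hsplit : ⟪g, sproj y w⟫ = ⟪g, ν⟫ + ⟪sproj y g, w - ν⟫ := by
    have hPν : ⟪sproj y g, ν⟫ = ⟪g, ν⟫ := by
      rw [← inner_sproj_right_s1, sproj_of_inner_eq_zero hν]
    rw [inner_sub_right, hPν, inner_sproj_right_s1]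
    ring
  have hcs : -(‖sproj y g‖ * ‖w - ν‖) ≤ ⟪sproj y g, w - ν⟫ :=
    neg_le_of_abs_le (abs_real_inner_le_norm _ _)
  nlinarith [norm_nonneg (w - ν)]

end Sproj

theorem hasDerivAt_sub_comp {E F : Type*} [NormedAddCommGroup E] [NormedSpace ℝ E]
    [NormedAddCommGroup F] [NormedSpace ℝ F] {x : ℝ → E} {v : ℝ → F} {ν : E → F} {x' : E}
    {c t : ℝ} (hx : HasDerivAt x x' t) (hν : DifferentiableAt ℝ ν (x t))
    (hv : HasDerivAt v (-c • (v t - ν (x t)) + fderiv ℝ ν (x t) x') t) :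
    HasDerivAt (fun s => v s - ν (x s)) (-c • (v t - ν (x t))) t :=
  (hv.sub (hν.hasFDerivAt.comp_hasDerivAt t hx)).congr_deriv (by simp)

theorem le_of_forall_lt_hasDerivAt_ge {f f' : ℝ → ℝ} {a t δ C : ℝ} (hC : 0 ≤ C) (hat : a ≤ t)
    (hf : ContinuousOn f (Icc a t))
    (hf' : ∀ τ ∈ Ioo a t, f τ < δ → HasDerivAt f (f' τ) τ ∧ C ≤ f' τ)
    (ha : δ ≤ f a + C * (t - a)) : δ ≤ f t := by
  set S := Icc a t ∩ (fun τ => f τ + C * (t - τ)) ⁻¹' Ici δ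
  have hSbdd : BddAbove S := ⟨t, fun τ hτ => hτ.1.2⟩
  have hsS : sSup S ∈ S :=
    ((hf.add (by fun_prop)).preimage_isClosed_of_isClosed isClosed_Icc isClosed_Ici).csSup_mem
      ⟨a, ⟨le_rfl, hat⟩, ha⟩ hSbdd
  set s := sSup S
  obtain ⟨⟨has, hst⟩, hs⟩ := hsS
  have hbelow : ∀ τ ∈ Ioo s t, f τ < δ := by
    intro τ hτ
    have hτS : τ ∉ S := fun h => hτ.1.not_ge (le_csSup hSbdd h)
    simp only [S, mem_inter_iff, mem_Icc, mem_preimage, mem_Ici, not_and, not_le] at hτS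
    nlinarith [hτS ⟨has.trans hτ.1.le, hτ.2.le⟩, hτ.2]
  have hmono : MonotoneOn (fun τ => f τ - C * τ) (Icc s t) := by
    have hderiv : ∀ τ ∈ Ioo s t, HasDerivAt (fun τ => f τ - C * τ) (f' τ - C) τ ∧ C ≤ f' τ :=
      fun τ hτ => by
        obtain ⟨hd, hC'⟩ := hf' τ ⟨has.trans_lt hτ.1, hτ.2⟩ (hbelow τ hτ)
        exact ⟨hd.sub (by simpa using (hasDerivAt_id τ).const_mul C), hC'⟩
    refine monotoneOn_of_hasDerivWithinAt_nonneg (f' := fun τ => f' τ - C) (convex_Icc s t)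
      ((hf.mono (Icc_subset_Icc_left has)).sub (by fun_prop)) (fun τ hτ => ?_) fun τ hτ => ?_
    · rw [interior_Icc] at hτ ⊢
      exact (hderiv τ hτ).1.hasDerivWithinAt
    · rw [interior_Icc] at hτ
      exact sub_nonneg.2 (hderiv τ hτ).2
  have := hmono ⟨le_rfl, hst⟩ ⟨hst, le_rfl⟩ hst
  simp only [mem_preimage, mem_Ici] at this hs
  linarith

theorem exists_forall_le_of_hasDerivAt_ge {f f' r : ℝ → ℝ} {μ D δ : ℝ}
    (hμ : 0 < μ) (hδ : 0 ≤ δ) (hf : ContinuousOn f (Ici 0)) (hpos : ∀ t, 0 ≤ t → 0 < f t)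
    (hf' : ∀ t, 0 ≤ t → 0 < f t → f t ≤ δ → HasDerivAt f (f' t) t ∧ μ - D * r t ≤ f' t)
    (hr : Tendsto r atTop (𝓝 0)) :
    ∃ T, 0 ≤ T ∧ ∀ t, T ≤ t → δ ≤ f t := by
  obtain ⟨T₀, hT₀⟩ := eventually_atTop.1 <| (eventually_ge_atTop 0).and <|
    (hr.const_mul D).eventually (Iic_mem_nhds (show D * 0 < μ / 2 by simpa))
  have hT₀0 := (hT₀ T₀ le_rfl).1
  have hδμ : 0 ≤ 2 * δ / μ := by positivity
  refine ⟨T₀ + 2 * δ / μ, by linarith, fun t ht => ?_⟩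
  refine le_of_forall_lt_hasDerivAt_ge (f' := f') (C := μ / 2) (by positivity) (by linarith)
    (hf.mono fun τ hτ => hT₀0.trans hτ.1) (fun τ hτ hlt => ?_) ?_
  · obtain ⟨hτ0, hτsmall⟩ := hT₀ τ hτ.1.le
    obtain ⟨hd, hbound⟩ := hf' τ hτ0 (hpos τ hτ0) hlt.le
    exact ⟨hd, by linarith [show D * r τ ≤ μ / 2 from hτsmall]⟩
  · have : δ ≤ μ / 2 * (t - T₀) :=
      calc δ = μ / 2 * (2 * δ / μ) := by field_simp
        _ ≤ μ / 2 * (t - T₀) := by gcongr; linarith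
    linarith [hpos T₀ hT₀0]

theorem exists_first_zero {f : ℝ → ℝ} {a b : ℝ} (hab : a ≤ b) (hf : ContinuousOn f (Icc a b))
    (ha : 0 < f a) (hb : f b ≤ 0) : ∃ c ∈ Ioc a b, f c = 0 ∧ ∀ τ ∈ Ico a c, 0 < f τ := by
  set S := Icc a b ∩ f ⁻¹' Iic 0
  have hSbdd : BddBelow S := ⟨a, fun τ hτ => hτ.1.1⟩
  have hcS : sInf S ∈ S :=
    (hf.preimage_isClosed_of_isClosed isClosed_Icc isClosed_Iic).csInf_mem
      ⟨b, ⟨hab, le_rfl⟩, hb⟩ hSbdd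
  set c := sInf S
  obtain ⟨⟨hac, hcb⟩, hc⟩ := hcS
  have hpos : ∀ τ ∈ Ico a c, 0 < f τ := fun τ hτ => by
    by_contra! h
    exact hτ.2.not_ge (csInf_le hSbdd ⟨⟨hτ.1, hτ.2.le.trans hcb⟩, h⟩)
  have hac : a < c := hac.lt_of_ne fun h => by rw [← h] at hc; exact (hc : f a ≤ 0).not_gt ha
  refine ⟨c, ⟨hac, hcb⟩, le_antisymm hc ?_, hpos⟩
  by_contra! hneg
  obtain ⟨τ, hτ, hτ0⟩ :=
    intermediate_value_Icc' hac.le (hf.mono (Icc_subset_Icc_right hcb)) ⟨hneg.le, ha.le⟩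
  rcases hτ.2.lt_or_eq with h | rfl
  · exact (hpos τ ⟨hτ.1, h⟩).ne' hτ0
  · exact hneg.ne hτ0

section Damping

variable {F : Type*} [NormedAddCommGroup F] [InnerProductSpace ℝ F]

theorem antitoneOn_norm_mul_of_hasDerivAt {e : ℝ → F} {a w w' : ℝ → ℝ} {s : Set ℝ}
    (hs : Convex ℝ s) (he : ∀ t ∈ s, HasDerivAt e (-a t • e t) t)
    (hw : ∀ t ∈ s, HasDerivAt w (w' t) t) (hw₀ : ∀ t ∈ s, 0 ≤ w t)
    (hw' : ∀ t ∈ s, w' t ≤ a t * w t) :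
    AntitoneOn (fun t => ‖e t‖ * w t) s := by
  have hderiv : ∀ t ∈ s, HasDerivAt (fun t => (‖e t‖ * w t) ^ 2)
      (2 * ‖e t‖ ^ 2 * w t * (w' t - a t * w t)) t := by
    intro t ht
    simp only [mul_pow]
    refine ((he t ht).norm_sq.mul ((hw t ht).pow 2)).congr_deriv ?_
    rw [real_inner_smul_right, real_inner_self_eq_norm_sq, Pi.pow_apply]
    push_cast
    ring
  have hsq : AntitoneOn (fun t => (‖e t‖ * w t) ^ 2) s := by
    refine antitoneOn_of_hasDerivWithinAt_nonpos hs
      (fun t ht => (hderiv t ht).continuousAt.continuousWithinAt)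
      (fun t ht => (hderiv t (interior_subset ht)).hasDerivWithinAt) fun t ht => ?_
    replace ht := interior_subset ht
    exact mul_nonpos_of_nonneg_of_nonpos (by have := hw₀ t ht; positivity)
      (sub_nonpos.2 (hw' t ht))
  intro t ht u hu htu
  exact (pow_le_pow_iff_left₀ (mul_nonneg (norm_nonneg _) (hw₀ u hu))
    (mul_nonneg (norm_nonneg _) (hw₀ t ht)) two_ne_zero).1 (hsq ht hu htu)

theorem tendsto_norm_atTop_of_damping {e : ℝ → F} {a : ℝ → ℝ} {k : ℝ} (hk : 0 < k)
    (he : ∀ t, 0 ≤ t → HasDerivAt e (-a t • e t) t) (ha : ∀ t, 0 ≤ t → k ≤ a t) :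
    Tendsto (fun t => ‖e t‖) atTop (𝓝 0) := by
  have hanti : AntitoneOn (fun t => ‖e t‖ * Real.exp (k * t)) (Ici 0) :=
    antitoneOn_norm_mul_of_hasDerivAt (convex_Ici 0) he
      (fun t _ => ((hasDerivAt_id t).const_mul k).exp.congr_deriv (by simp [mul_comm]))
      (fun t _ => (Real.exp_pos _).le)
      (fun t ht => mul_le_mul_of_nonneg_right (ha t ht) (Real.exp_pos _).le)
  have hle : ∀ t, 0 ≤ t → ‖e t‖ ≤ ‖e 0‖ * Real.exp (-(k * t)) := fun t ht => by
    have := hanti (mem_Ici.2 le_rfl) ht ht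
    simp only [mul_zero, Real.exp_zero, mul_one] at this
    rwa [Real.exp_neg, ← div_eq_mul_inv, le_div_iff₀ (Real.exp_pos _)]
  refine squeeze_zero' (Eventually.of_forall fun t => norm_nonneg _)
    ((eventually_ge_atTop 0).mono hle) ?_
  simpa using (Real.tendsto_exp_neg_atTop_nhds_zero.comp
    (tendsto_id.const_mul_atTop hk)).const_mul ‖e 0‖

theorem tendsto_norm_nhdsLT_of_damping {e : ℝ → F} {f f' : ℝ → ℝ} {k D s₀ t₁ : ℝ}
    (hk : 0 < k) (hD : 0 ≤ D) (hs : s₀ < t₁)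
    (hf : ∀ t ∈ Ico s₀ t₁, 0 < f t ∧ HasDerivAt f (f' t) t ∧ -(D * ‖e t‖) ≤ f' t)
    (he : ∀ t ∈ Ico s₀ t₁, HasDerivAt e (-(k / f t) • e t) t)
    (hlim : Tendsto f (𝓝[<] t₁) (𝓝 0)) :
    Tendsto (fun t => ‖e t‖) (𝓝[<] t₁) (𝓝 0) := by
  have hs₀ : s₀ ∈ Ico s₀ t₁ := ⟨le_rfl, hs⟩
  have hbdd : ∀ t ∈ Ico s₀ t₁, ‖e t‖ ≤ ‖e s₀‖ := fun t ht => by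
    simpa using antitoneOn_norm_mul_of_hasDerivAt (convex_Ico s₀ t₁) he
      (fun t _ => hasDerivAt_const t 1) (fun _ _ => zero_le_one)
      (fun t ht => by simpa using (div_pos hk (hf t ht).1).le) hs₀ ht ht.1
  set c := k / (D * ‖e s₀‖ + 1)
  have hc : 0 < c := div_pos hk (by positivity)
  -- `f' ≥ -k / c`, so the weight `f ^ (-c)` grows no faster than the damping `k / f` permits.
  have hweight : AntitoneOn (fun t => ‖e t‖ * f t ^ (-c)) (Ico s₀ t₁) := by
    refine antitoneOn_norm_mul_of_hasDerivAt (convex_Ico s₀ t₁) he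
      (fun t ht => (hf t ht).2.1.rpow_const (Or.inl (hf t ht).1.ne'))
      (fun t ht => Real.rpow_nonneg (hf t ht).1.le _) fun t ht => ?_
    obtain ⟨hpos, -, hf't⟩ := hf t ht
    have hslope : f' t * -c ≤ k := by
      have : D * ‖e t‖ ≤ D * ‖e s₀‖ := mul_le_mul_of_nonneg_left (hbdd t ht) hD
      have hck : c * (D * ‖e s₀‖ + 1) = k := div_mul_cancel₀ _ (by positivity)
      nlinarith
    calc f' t * -c * f t ^ (-c - 1) ≤ k * f t ^ (-c - 1) :=
          mul_le_mul_of_nonneg_right hslope (Real.rpow_nonneg hpos.le _)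
      _ = k / f t * f t ^ (-c) := by rw [Real.rpow_sub_one hpos.ne']; ring
  set K := ‖e s₀‖ * f s₀ ^ (-c)
  have hle : ∀ t ∈ Ico s₀ t₁, ‖e t‖ ≤ K * f t ^ c := fun t ht => by
    have : ‖e t‖ * f t ^ (-c) ≤ K := hweight hs₀ ht ht.1
    rwa [Real.rpow_neg (hf t ht).1.le, ← div_eq_mul_inv,
      div_le_iff₀ (Real.rpow_pos_of_pos (hf t ht).1 _)] at this
  have hlim' : Tendsto (fun t => K * f t ^ c) (𝓝[<] t₁) (𝓝 0) := by
    simpa [Real.zero_rpow hc.ne'] using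
      ((Real.continuousAt_rpow_const 0 c (Or.inr hc.le)).tendsto.comp hlim).const_mul K
  refine squeeze_zero' (Eventually.of_forall fun t => norm_nonneg _) ?_ hlim'
  filter_upwards [Ico_mem_nhdsLT hs] with t ht using hle t ht

theorem forall_pos_of_damping {e : ℝ → F} {f f' : ℝ → ℝ} {k μ D ε : ℝ}
    (hk : 0 < k) (hμ : 0 < μ) (hD : 0 ≤ D) (hε : 0 < ε)
    (hf : ContinuousOn f (Ici 0)) (h0 : 0 < f 0)
    (hf' : ∀ t, 0 ≤ t → 0 < f t → f t ≤ ε → HasDerivAt f (f' t) t ∧ μ - D * ‖e t‖ ≤ f' t)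
    (he : ∀ t, 0 ≤ t → 0 < f t → f t ≤ ε → HasDerivAt e (-(k / f t) • e t) t) :
    ∀ t, 0 ≤ t → 0 < f t := by
  intro t ht
  by_contra! hneg
  obtain ⟨t₁, ⟨ht₁, -⟩, hft₁, hpos⟩ :=
    exists_first_zero ht (hf.mono Icc_subset_Ici_self) h0 hneg
  have hlim : Tendsto f (𝓝[<] t₁) (𝓝 0) :=
    hft₁ ▸ (hf.continuousAt (Ici_mem_nhds ht₁)).tendsto.mono_left nhdsWithin_le_nhds
  obtain ⟨s₀, hs₀, hwin⟩ := mem_nhdsLT_iff_exists_Ico_subset.1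
    (inter_mem (Ioo_mem_nhdsLT ht₁) (hlim.eventually (Iic_mem_nhds hε)))
  have hgood : ∀ τ ∈ Ico s₀ t₁, 0 < f τ ∧ HasDerivAt f (f' τ) τ ∧
      μ - D * ‖e τ‖ ≤ f' τ ∧ HasDerivAt e (-(k / f τ) • e τ) τ := fun τ hτ => by
    obtain ⟨⟨hτ0, hτt₁⟩, hτε⟩ := hwin hτ
    have hτpos := hpos τ ⟨hτ0.le, hτt₁⟩
    obtain ⟨hd, hbound⟩ := hf' τ hτ0.le hτpos hτε
    exact ⟨hτpos, hd, hbound, he τ hτ0.le hτpos hτε⟩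
  have hnorm : Tendsto (fun τ => ‖e τ‖) (𝓝[<] t₁) (𝓝 0) :=
    tendsto_norm_nhdsLT_of_damping hk hD hs₀
      (fun τ hτ => have h := hgood τ hτ; ⟨h.1, h.2.1, by linarith [h.2.2.1]⟩)
      (fun τ hτ => (hgood τ hτ).2.2.2) hlim
  obtain ⟨t', ht', hwin'⟩ := mem_nhdsLT_iff_exists_Ico_subset.1
    (inter_mem (Ico_mem_nhdsLT hs₀)
      ((hnorm.const_mul D).eventually (Iic_mem_nhds (show D * 0 < μ by simpa))))
  have ht'good := hgood t' (hwin' ⟨le_rfl, ht'⟩).1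
  have hmono : f t' ≤ f t₁ := by
    refine le_of_forall_lt_hasDerivAt_ge (f' := f') (C := 0) le_rfl ht'.out.le
      (hf.mono fun τ hτ => (hwin (hwin' ⟨le_rfl, ht'⟩).1).1.1.le.trans hτ.1)
      (fun τ hτ _ => ?_) (by simp)
    obtain ⟨hτwin, hτsmall⟩ := hwin' ⟨hτ.1.le, hτ.2⟩
    obtain ⟨-, hd, hbound, -⟩ := hgood τ hτwin
    exact ⟨hd, by linarith [show D * ‖e τ‖ ≤ μ from hτsmall]⟩
  linarith [ht'good.1]

end Damping

theorem safety_claim2_general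
    (n : ℕ)
    (d : EuclideanSpace ℝ (Fin (n+1)) → ℝ)
    (ν : EuclideanSpace ℝ (Fin (n+1)) → EuclideanSpace ℝ (Fin (n+1)))
    (b : ℝ → ℝ)
    (μ D_d δ_d δ_u ε₁ k : ℝ)
    (hμ : 0 < μ) (hDd : 0 < D_d)
    (hδd : 0 < δ_d) (hδdu : δ_d ≤ δ_u) (hε₁ : 0 < ε₁)
    (hk : 0 < k)
    (x v : ℝ → EuclideanSpace ℝ (Fin (n+1)))
    -- x evolves on the unit sphere
    (hx_sphere : ∀ t : ℝ, 0 ≤ t → ‖x t‖ = 1)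
    -- closed-loop dynamics: x' = P(x) v
    (hx_ode : ∀ t : ℝ, 0 ≤ t → HasDerivAt x (sproj (x t) (v t)) t)
    -- v' = -k b(d(x)) (v - ν(x)) + Dν(x) (P(x) v)
    (hv_ode : ∀ t : ℝ, 0 ≤ t →
      HasDerivAt v
        (-(k * b (d (x t))) • (v t - ν (x t)) +
          fderiv ℝ ν (x t) (sproj (x t) (v t))) t)
    -- (i) d continuous on the unit sphere, differentiable near the unsafe set,
    -- and chain rule along the curve
    (hd_cont : ContinuousOn d (Metric.sphere (0 : EuclideanSpace ℝ (Fin (n+1))) 1))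
    (hd_chain : ∀ t : ℝ, 0 ≤ t → 0 < d (x t) → d (x t) ≤ δ_u →
      HasDerivAt (fun s => d (x s)) ⟪gradient d (x t), sproj (x t) (v t)⟫ t)
    -- (ii) bounded projected gradient near the unsafe set
    (hgrad_bdd : ∀ y : EuclideanSpace ℝ (Fin (n+1)), ‖y‖ = 1 →
      0 < d y → d y ≤ δ_u → ‖sproj y (gradient d y)‖ ≤ D_d)
    -- (iii) the desired vector field points away from the unsafe set
    (hmove : ∀ y : EuclideanSpace ℝ (Fin (n+1)), ‖y‖ = 1 →
      0 < d y → d y ≤ δ_d → μ ≤ ⟪gradient d y, ν y⟫)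
    -- (iv) ν is tangent and bounded on the free space
    (hν_tangent : ∀ y : EuclideanSpace ℝ (Fin (n+1)), ‖y‖ = 1 → 0 < d y → ⟪y, ν y⟫ = 0)
    -- (v) damping profile
    (hb_eq : ∀ s : ℝ, 0 < s → s ≤ ε₁ → b s = 1 / s)
    (hb_ge_one : ∀ s : ℝ, 0 < s → 1 ≤ b s)
    -- (vi) ν differentiable along the trajectory
    (hν_diff : ∀ t : ℝ, 0 ≤ t → DifferentiableAt ℝ ν (x t))
    -- initial condition in the free space
    (h0 : 0 < d (x 0)) :
    ∃ T : ℝ, 0 ≤ T ∧ ∀ t : ℝ, T ≤ t → δ_d ≤ d (x t) := by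
  set f := fun t => d (x t)
  set e := fun t => v t - ν (x t)
  have hf_cont : ContinuousOn f (Ici 0) :=
    hd_cont.comp (fun t ht => (hx_ode t ht).continuousAt.continuousWithinAt)
      fun t ht => mem_sphere_zero_iff_norm.2 (hx_sphere t ht)
  have he : ∀ t, 0 ≤ t → HasDerivAt e (-(k * b (f t)) • e t) t := fun t ht =>
    hasDerivAt_sub_comp (hx_ode t ht) (hν_diff t ht) (hv_ode t ht)
  have hf' : ∀ t, 0 ≤ t → 0 < f t → f t ≤ δ_d →
      HasDerivAt f ⟪gradient d (x t), sproj (x t) (v t)⟫ t ∧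
        μ - D_d * ‖e t‖ ≤ ⟪gradient d (x t), sproj (x t) (v t)⟫ := fun t ht hpos hle => by
    have hsph := hx_sphere t ht
    exact ⟨hd_chain t ht hpos (hle.trans hδdu),
      (sub_le_sub_right (hmove _ hsph hpos hle) _).trans <| inner_sub_mul_norm_le_inner_sproj
        (hν_tangent _ hsph hpos) (hgrad_bdd _ hsph hpos (hle.trans hδdu))⟩
  have hpos : ∀ t, 0 ≤ t → 0 < f t :=
    forall_pos_of_damping hk hμ hDd.le (lt_min hε₁ hδd) hf_cont h0
      (fun t ht h1 h2 => hf' t ht h1 (h2.trans (min_le_right _ _)))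
      fun t ht h1 h2 => by
        simpa [hb_eq _ h1 (h2.trans (min_le_left _ _)), div_eq_mul_inv] using he t ht
  exact exists_forall_le_of_hasDerivAt_ge hμ hδd.le hf_cont hpos hf' <|
    tendsto_norm_atTop_of_damping hk he
      fun t ht => le_mul_of_one_le_right hk.le (hb_ge_one _ (hpos t ht))

/-- Claim 2 of Lemma 1: trajectories of the
closed-loop second-order system on the sphere eventually stay uniformly
separated (by δ_d) from the unsafe set. -/
theorem safety_claim2
    (n : ℕ)
    (d : EuclideanSpace ℝ (Fin (n+1)) → ℝ)
    (ν : EuclideanSpace ℝ (Fin (n+1)) → EuclideanSpace ℝ (Fin (n+1)))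
    (b : ℝ → ℝ)
    (μ D_d D₁ δ_d δ_u ε₁ k : ℝ)
    (hμ : 0 < μ) (hDd : 0 < D_d) (hD₁ : 0 < D₁)
    (hδd : 0 < δ_d) (hδdu : δ_d ≤ δ_u) (hε₁ : 0 < ε₁) (hε₁u : ε₁ < δ_u)
    (hk : 0 < k)
    (x v : ℝ → EuclideanSpace ℝ (Fin (n+1)))
    -- x and v are continuously differentiable on [0, ∞)
    (hx_smooth : ContDiffOn ℝ 1 x (Set.Ici (0:ℝ)))
    (hv_smooth : ContDiffOn ℝ 1 v (Set.Ici (0:ℝ)))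
    -- x evolves on the unit sphere
    (hx_sphere : ∀ t : ℝ, 0 ≤ t → ‖x t‖ = 1)
    -- closed-loop dynamics: x' = P(x) v
    (hx_ode : ∀ t : ℝ, 0 ≤ t → HasDerivAt x (sproj (x t) (v t)) t)
    -- v' = -k b(d(x)) (v - ν(x)) + Dν(x) (P(x) v)
    (hv_ode : ∀ t : ℝ, 0 ≤ t →
      HasDerivAt v
        (-(k * b (d (x t))) • (v t - ν (x t)) +
          fderiv ℝ ν (x t) (sproj (x t) (v t))) t)
    -- (i) d continuous on the unit sphere, differentiable near the unsafe set,
    -- and chain rule along the curve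
    (hd_cont : ContinuousOn d (Metric.sphere (0 : EuclideanSpace ℝ (Fin (n+1))) 1))
    (hd_diff : ∀ y : EuclideanSpace ℝ (Fin (n+1)), ‖y‖ = 1 →
      0 < d y → d y ≤ δ_u → DifferentiableAt ℝ d y)
    (hd_chain : ∀ t : ℝ, 0 ≤ t → 0 < d (x t) → d (x t) ≤ δ_u →
      HasDerivAt (fun s => d (x s)) ⟪gradient d (x t), sproj (x t) (v t)⟫ t)
    -- (ii) bounded projected gradient near the unsafe set
    (hgrad_bdd : ∀ y : EuclideanSpace ℝ (Fin (n+1)), ‖y‖ = 1 →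
      0 < d y → d y ≤ δ_u → ‖sproj y (gradient d y)‖ ≤ D_d)
    -- (iii) the desired vector field points away from the unsafe set
    (hmove : ∀ y : EuclideanSpace ℝ (Fin (n+1)), ‖y‖ = 1 →
      0 < d y → d y ≤ δ_d → μ ≤ ⟪gradient d y, ν y⟫)
    -- (iv) ν is tangent and bounded on the free space
    (hν_tangent : ∀ y : EuclideanSpace ℝ (Fin (n+1)), ‖y‖ = 1 → 0 < d y → ⟪y, ν y⟫ = 0)
    (hν_bdd : ∀ y : EuclideanSpace ℝ (Fin (n+1)), ‖y‖ = 1 → 0 < d y → ‖ν y‖ ≤ D₁)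
    -- (v) damping profile
    (hb_eq : ∀ s : ℝ, 0 < s → s ≤ ε₁ → b s = 1 / s)
    (hb_ge_one : ∀ s : ℝ, 0 < s → 1 ≤ b s)
    -- (vi) ν differentiable along the trajectory
    (hν_diff : ∀ t : ℝ, 0 ≤ t → DifferentiableAt ℝ ν (x t))
    -- initial condition in the free space
    (h0 : 0 < d (x 0)) :
    ∃ T : ℝ, 0 ≤ T ∧ ∀ t : ℝ, T ≤ t → δ_d ≤ d (x t) :=
  safety_claim2_general n d ν b μ D_d δ_d δ_u ε₁ k hμ hDd hδd hδdu hε₁ hk x v hx_sphere hx_ode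
    hv_ode hd_cont hd_chain hgrad_bdd hmove hν_tangent hb_eq hb_ge_one hν_diff h0
end

section
/- Let x, v : [0,∞) → E be continuously differentiable curves with ‖x(t)‖ = 1 for all t ≥ 0, satisfying x'(t) = P(x(t)) v(t) and v'(t) = u(t), where the control input is u(t) = -k·b(d(x(t))) • (v(t) - ν(x(t))) + (Dν(x(t)))(P(x(t)) v(t)) with k > 0. Assume hypotheses (i)–(vii) of Claim 2 of Lemma 1 (d continuous on the sphere and differentiable with ‖P∇d‖ ≤ D_d where 0 < d ≤ δ_u, ⟪∇d, ν⟫ ≥ μ where 0 < d ≤ δ_d, ν tangent with ‖ν‖ ≤ D₁ on {d > 0}, b(s) = 1/s on (0, ε₁] and b(s) ≥ 1 for s > 0, d(x(0)) > 0), and in addition: b is continuous on (0, ∞); ν is continuously differentiable on the open set of unit vectors y with d(y) > 0; and ‖Dν(y)‖ ≤ D₂ for every unit y with d(y) ≥ δ_d. Then there exists a constant C > 0, depending on the initial condition (x(0), v(0)), such that ‖u(t)‖ ≤ C for all t ≥ 0. -/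
/-!
Along the trajectory the tracking error `e = v - ν(x)` obeys `e' = -k b(d(x)) e`, so `‖e‖` decays
like `e^{-kt}` as long as `d(x) > 0`. Near the boundary `b = 1/d`, and the estimate
`d(x)' ≥ μ - D_d ‖e‖` makes `log d(x) - (D_d/k) ‖e‖` nondecreasing, so `d(x)` cannot reach `0`.
Once `D_d ‖e‖ ≤ μ/2`, `d(x)` grows at rate `μ/2` while below `δ_d`, hence reaches `δ_d` and never
drops below it again. From then on `b(d(x))`, `‖e‖`, `‖ν‖` and `‖Dν‖` are bounded, which bounds
`u`; before that time `u = v'` is continuous on a compact interval.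
-/

open scoped RealInnerProductSpace

open Set Filter Topology Real

section RealLine

variable {g g' : ℝ → ℝ} {a b c : ℝ}

theorem monotoneOn_Icc_of_hasDerivAt_nonneg (hg : ContinuousOn g (Icc a b))
    (hd : ∀ t ∈ Ioo a b, HasDerivAt g (g' t) t) (h0 : ∀ t ∈ Ioo a b, 0 ≤ g' t) :
    MonotoneOn g (Icc a b) := by
  refine monotoneOn_of_hasDerivWithinAt_nonneg (f' := g') (convex_Icc a b) hg ?_ ?_ <;>
    rw [interior_Icc]
  exacts [fun t ht => (hd t ht).hasDerivWithinAt, h0]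

theorem exists_mem_Icc_le_forall_Ioc_lt (hab : a ≤ b) (hg : ContinuousOn g (Icc a b))
    (ha : c ≤ g a) : ∃ r ∈ Icc a b, c ≤ g r ∧ ∀ s ∈ Ioc r b, g s < c := by
  set A := Icc a b ∩ g ⁻¹' Ici c
  have hA : IsClosed A := hg.preimage_isClosed_of_isClosed isClosed_Icc isClosed_Ici
  have hbdd : BddAbove A := bddAbove_Icc.mono inter_subset_left
  obtain ⟨hr, hcr⟩ := hA.csSup_mem ⟨a, ⟨left_mem_Icc.mpr hab, ha⟩⟩ hbdd
  refine ⟨sSup A, hr, hcr, fun s hs => not_le.mp fun hcs => ?_⟩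
  exact hs.1.not_ge (le_csSup hbdd ⟨⟨hr.1.trans hs.1.le, hs.2⟩, hcs⟩)

theorem le_of_hasDerivAt_nonneg_of_lt (hab : a ≤ b) (hg : ContinuousOn g (Icc a b))
    (ha : c ≤ g a) (hd : ∀ t ∈ Ioo a b, g t < c → HasDerivAt g (g' t) t)
    (h0 : ∀ t ∈ Ioo a b, g t < c → 0 ≤ g' t) : c ≤ g b := by
  obtain ⟨r, hr, hcr, hlt⟩ := exists_mem_Icc_le_forall_Ioc_lt hab hg ha
  have hsub : Icc r b ⊆ Icc a b := Icc_subset_Icc_left hr.1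
  have hmono : MonotoneOn g (Icc r b) :=
    monotoneOn_Icc_of_hasDerivAt_nonneg (hg.mono hsub)
      (fun t ht => hd t (Ioo_subset_Ioo_left hr.1 ht) (hlt t (Ioo_subset_Ioc_self ht)))
      (fun t ht => h0 t (Ioo_subset_Ioo_left hr.1 ht) (hlt t (Ioo_subset_Ioc_self ht)))
  exact hcr.trans (hmono (left_mem_Icc.mpr hr.2) (right_mem_Icc.mpr hr.2) hr.2)

theorem eventually_ge_of_hasDerivAt_ge_of_lt {κ : ℝ} (hκ : 0 < κ) (hg : ContinuousOn g (Ici a))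
    (hd : ∀ t, a < t → g t < c → HasDerivAt g (g' t) t)
    (hκg : ∀ t, a < t → g t < c → κ ≤ g' t) : ∀ᶠ t in atTop, c ≤ g t := by
  obtain ⟨T, hT, hcT⟩ : ∃ T, a ≤ T ∧ c ≤ g T := by
    by_contra! hlt
    set X := a + (c - g a) / κ
    have haX : a ≤ X := le_add_of_nonneg_right (div_nonneg (sub_pos.mpr (hlt a le_rfl)).le hκ.le)
    have hmono : MonotoneOn (fun t => g t - κ * t) (Icc a X) := by
      refine monotoneOn_Icc_of_hasDerivAt_nonneg
        ((hg.mono Icc_subset_Ici_self).sub (continuousOn_const.mul continuousOn_id))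
        (fun t ht => (hd t ht.1 (hlt t ht.1.le)).sub ((hasDerivAt_id t).const_mul κ))
        (fun t ht => ?_)
      simpa using hκg t ht.1 (hlt t ht.1.le)
    have := hmono (left_mem_Icc.mpr haX) (right_mem_Icc.mpr haX) haX
    have hX : κ * (X - a) = c - g a := by simp only [X]; field_simp; ring
    linarith [hlt X haX]
  refine eventually_atTop.mpr ⟨T, fun t ht => ?_⟩
  refine le_of_hasDerivAt_nonneg_of_lt ht (hg.mono fun s hs => hT.trans hs.1) hcT
    (fun s hs => hd s (hT.trans_lt hs.1)) (fun s hs hgs => ?_)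
  exact hκ.le.trans (hκg s (hT.trans_lt hs.1) hgs)

theorem forall_lt_of_forall_Icc_lt_imp_le {c' : ℝ} (hc : c < c') (hg : ContinuousOn g (Ici a))
    (ha : c < g a) (h : ∀ t, a ≤ t → (∀ s ∈ Icc a t, c < g s) → c' ≤ g t) :
    ∀ t, a ≤ t → c < g t := by
  by_contra! hex
  obtain ⟨t, hat, hgt⟩ := hex
  set S := Icc a t ∩ g ⁻¹' Iic c
  have hS : IsClosed S :=
    (hg.mono Icc_subset_Ici_self).preimage_isClosed_of_isClosed isClosed_Icc isClosed_Iic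
  have hbdd : BddBelow S := bddBelow_Icc.mono inter_subset_left
  obtain ⟨⟨hat₂, ht₂t⟩, hgt₂⟩ : sInf S ∈ S := hS.csInf_mem ⟨t, ⟨right_mem_Icc.mpr hat, hgt⟩⟩ hbdd
  set t₂ := sInf S
  have hbefore : ∀ s ∈ Ico a t₂, c < g s := fun s hs => not_le.mp fun hgs =>
    hs.2.not_ge (csInf_le hbdd ⟨⟨hs.1, hs.2.le.trans ht₂t⟩, hgs⟩)
  have hat₂' : a ≠ t₂ := fun heq => (ha.trans_le (heq ▸ hgt₂)).false
  have hclosed : IsClosed (Icc a t₂ ∩ g ⁻¹' Ici c') :=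
    (hg.mono Icc_subset_Ici_self).preimage_isClosed_of_isClosed isClosed_Icc isClosed_Ici
  have hsub : closure (Ico a t₂) ⊆ Icc a t₂ ∩ g ⁻¹' Ici c' :=
    closure_minimal (fun s hs => ⟨Ico_subset_Icc_self hs,
      h s hs.1 fun r hr => hbefore r ⟨hr.1, hr.2.trans_lt hs.2⟩⟩) hclosed
  rw [closure_Ico hat₂'] at hsub
  exact (hgt₂.trans_lt hc).not_ge (hsub (right_mem_Icc.mpr hat₂)).2

end RealLine

/-- The one-dimensional comparison system behind the safety argument: `g` is the separation
along the trajectory, `G` its derivative near the unsafe set, `E` the norm of the tracking error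
and `b` the damping profile. -/
structure BarrierSystem (g G E b : ℝ → ℝ) (k D μ δ ε : ℝ) : Prop where
  k_pos : 0 < k
  D_nonneg : 0 ≤ D
  μ_pos : 0 < μ
  δ_pos : 0 < δ
  ε_pos : 0 < ε
  continuousOn : ContinuousOn g (Ici 0)
  pos_zero : 0 < g 0
  hasDerivAt : ∀ t, 0 ≤ t → 0 < g t → g t ≤ δ → HasDerivAt g (G t) t
  le_deriv : ∀ t, 0 ≤ t → 0 < g t → g t ≤ δ → μ - D * E t ≤ G t
  hasDerivAt_error : ∀ t, 0 ≤ t → HasDerivAt E (-(k * b (g t)) * E t) t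
  error_nonneg : ∀ t, 0 ≤ E t
  damping_eq : ∀ s, 0 < s → s ≤ ε → b s = 1 / s
  one_le_damping : ∀ s, 0 < s → 1 ≤ b s

namespace BarrierSystem

variable {g G E b : ℝ → ℝ} {k D μ δ ε : ℝ}

theorem error_le_of_pos (h : BarrierSystem g G E b k D μ δ ε) {t : ℝ} (ht : 0 ≤ t)
    (hpos : ∀ s ∈ Icc 0 t, 0 < g s) : E t ≤ E 0 * exp (-k * t) := by
  have hE : ∀ s ∈ Icc 0 t, HasDerivAt E (-(k * b (g s)) * E s) s :=
    fun s hs => h.hasDerivAt_error s hs.1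
  have := le_gronwallBound_of_liminf_deriv_right_le (K := -k) (ε := 0)
    (fun s hs => (hE s hs).continuousAt.continuousWithinAt)
    (fun s hs _ hr => (hE s (Ico_subset_Icc_self hs)).hasDerivWithinAt.liminf_right_slope_le hr)
    le_rfl (fun s hs => ?_) t (right_mem_Icc.mpr ht)
  · simpa [gronwallBound_ε0] using this
  · have := h.one_le_damping _ (hpos s (Ico_subset_Icc_self hs))
    nlinarith [mul_nonneg (mul_nonneg h.k_pos.le (sub_nonneg.mpr this)) (h.error_nonneg s)]

theorem error_le_error_zero_of_pos (h : BarrierSystem g G E b k D μ δ ε) {t : ℝ} (ht : 0 ≤ t)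
    (hpos : ∀ s ∈ Icc 0 t, 0 < g s) : E t ≤ E 0 :=
  (h.error_le_of_pos ht hpos).trans <| mul_le_of_le_one_right (h.error_nonneg 0) <|
    exp_le_one_iff.mpr (by nlinarith [h.k_pos])

theorem exists_pos_le_of_pos (h : BarrierSystem g G E b k D μ δ ε) :
    ∃ c > 0, ∀ t, 0 ≤ t → (∀ s ∈ Icc 0 t, 0 < g s) → c ≤ g t := by
  set m := min (g 0) (min ε δ)
  have hm : 0 < m := lt_min h.pos_zero (lt_min h.ε_pos h.δ_pos)
  refine ⟨m * exp (-(D / k * E 0)), by positivity, fun t ht hpos => ?_⟩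
  obtain ⟨r, hr, hmr, hlt⟩ := exists_mem_Icc_le_forall_Ioc_lt (c := m) ht
    (h.continuousOn.mono Icc_subset_Ici_self) (min_le_left _ _)
  have hsub : Icc r t ⊆ Icc 0 t := Icc_subset_Icc_left hr.1
  have hbelow : ∀ s ∈ Ioo r t, 0 ≤ s ∧ 0 < g s ∧ g s ≤ ε ∧ g s ≤ δ := fun s hs =>
    have hgm : g s ≤ m := (hlt s (Ioo_subset_Ioc_self hs)).le
    ⟨hr.1.trans hs.1.le, hpos s (hsub (Ioo_subset_Icc_self hs)),
      hgm.trans ((min_le_right _ _).trans (min_le_left _ _)),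
      hgm.trans ((min_le_right _ _).trans (min_le_right _ _))⟩
  have hΨ : MonotoneOn (fun s => log (g s) - D / k * E s) (Icc r t) := by
    refine monotoneOn_Icc_of_hasDerivAt_nonneg
      (g' := fun s => G s / g s - D / k * (-(k * b (g s)) * E s)) ?_ (fun s hs => ?_)
      (fun s hs => ?_)
    · refine ((h.continuousOn.mono fun s hs => (hsub hs).1).log
        fun s hs => (hpos s (hsub hs)).ne').sub (continuousOn_const.mul fun s hs => ?_)
      exact (h.hasDerivAt_error s (hsub hs).1).continuousAt.continuousWithinAt
    · obtain ⟨hs₀, hgs, -, hgδ⟩ := hbelow s hs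
      exact ((h.hasDerivAt s hs₀ hgs hgδ).log hgs.ne').sub
        ((h.hasDerivAt_error s hs₀).const_mul (D / k))
    · obtain ⟨hs₀, hgs, hgε, hgδ⟩ := hbelow s hs
      have : G s / g s - D / k * (-(k * b (g s)) * E s) = (G s + D * E s) / g s := by
        rw [h.damping_eq _ hgs hgε]
        field_simp [h.k_pos.ne']
        ring
      rw [this]
      exact div_nonneg (by linarith [h.le_deriv s hs₀ hgs hgδ, h.μ_pos]) hgs.le
  have hΨrt := hΨ (left_mem_Icc.mpr hr.2) (right_mem_Icc.mpr hr.2) hr.2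
  have hEr : D / k * E r ≤ D / k * E 0 :=
    mul_le_mul_of_nonneg_left (h.error_le_error_zero_of_pos hr.1 fun s hs => hpos s
      ⟨hs.1, hs.2.trans hr.2⟩) (div_nonneg h.D_nonneg h.k_pos.le)
  have hEt : 0 ≤ D / k * E t := mul_nonneg (div_nonneg h.D_nonneg h.k_pos.le) (h.error_nonneg t)
  have hlog : log m ≤ log (g r) := log_le_log hm hmr
  calc m * exp (-(D / k * E 0)) = exp (log m - D / k * E 0) := by
        rw [sub_eq_add_neg, exp_add, exp_log hm]
    _ ≤ exp (log (g t)) := exp_le_exp.mpr (by simp only at hΨrt; linarith)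
    _ = g t := exp_log (hpos t (right_mem_Icc.mpr ht))

theorem pos (h : BarrierSystem g G E b k D μ δ ε) : ∀ t, 0 ≤ t → 0 < g t := by
  obtain ⟨c, hc, hle⟩ := h.exists_pos_le_of_pos
  exact forall_lt_of_forall_Icc_lt_imp_le hc h.continuousOn h.pos_zero hle

theorem error_le (h : BarrierSystem g G E b k D μ δ ε) {t : ℝ} (ht : 0 ≤ t) :
    E t ≤ E 0 * exp (-k * t) :=
  h.error_le_of_pos ht fun s hs => h.pos s hs.1

theorem eventually_ge (h : BarrierSystem g G E b k D μ δ ε) : ∀ᶠ t in atTop, δ ≤ g t := by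
  have hsmall : ∀ᶠ t in atTop, 0 ≤ t ∧ D * (E 0 * exp (-k * t)) ≤ μ / 2 := by
    refine (eventually_ge_atTop 0).and (Tendsto.eventually_le_const (half_pos h.μ_pos) ?_)
    simpa using ((tendsto_exp_atBot.comp
      (tendsto_id.const_mul_atTop_of_neg (neg_lt_zero.mpr h.k_pos))).const_mul (E 0)).const_mul D
  obtain ⟨T, hT⟩ := eventually_atTop.mp hsmall
  have hT₀ : 0 ≤ T := (hT T le_rfl).1
  refine eventually_ge_of_hasDerivAt_ge_of_lt (a := T) (g' := G) (half_pos h.μ_pos)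
    (h.continuousOn.mono fun s hs => hT₀.trans hs) (fun t ht hgt => ?_) (fun t ht hgt => ?_)
  · exact h.hasDerivAt t (hT₀.trans ht.le) (h.pos t (hT₀.trans ht.le)) hgt.le
  · have hE := mul_le_mul_of_nonneg_left (h.error_le (hT₀.trans ht.le)) h.D_nonneg
    linarith [h.le_deriv t (hT₀.trans ht.le) (h.pos t (hT₀.trans ht.le)) hgt.le, (hT t ht.le).2]

end BarrierSystem

section InnerProductSpace

variable {F : Type*} [NormedAddCommGroup F] [InnerProductSpace ℝ F]

theorem HasDerivAt.norm_of_smul_self {f : ℝ → F} {c t : ℝ} (hf : HasDerivAt f (c • f t) t) :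
    HasDerivAt (fun s => ‖f s‖) (c * ‖f t‖) t := by
  rcases eq_or_ne (f t) 0 with h0 | h0
  · rw [hasDerivAt_iff_isLittleO] at hf ⊢
    simp only [h0, norm_zero, smul_zero, sub_zero, mul_zero] at hf ⊢
    exact hf.norm_left
  · have hsq : HasDerivAt (fun s => ‖f s‖ ^ 2) (2 * c * ‖f t‖ ^ 2) t := by
      convert hf.norm_sq using 1
      rw [real_inner_smul_right, real_inner_self_eq_norm_sq]
      ring
    have hpos : 0 < ‖f t‖ := norm_pos_iff.mpr h0
    convert hsq.sqrt (by positivity) using 1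
    · simp [sqrt_sq (norm_nonneg _)]
    · rw [sqrt_sq hpos.le]
      field_simp

theorem inner_sproj_left_eq_right (x w e : F) : ⟪sproj x w, e⟫ = ⟪w, sproj x e⟫ := by
  simp only [sproj, inner_sub_left, inner_sub_right, real_inner_smul_left,
    real_inner_smul_right, real_inner_comm x w]
  ring

theorem norm_sproj_le {x : F} (hx : ‖x‖ = 1) (e : F) : ‖sproj x e‖ ≤ ‖e‖ := by
  have : ‖sproj x e‖ ^ 2 = ‖e‖ ^ 2 - ⟪x, e⟫ ^ 2 := by
    simp only [sproj, ← real_inner_self_eq_norm_sq, inner_sub_left, inner_sub_right,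
      real_inner_smul_left, real_inner_smul_right, real_inner_comm x e]
    rw [real_inner_self_eq_norm_sq x, hx]
    ring
  exact (sq_le_sq₀ (norm_nonneg _) (norm_nonneg _)).mp
    (by rw [this]; nlinarith [sq_nonneg ⟪x, e⟫])

theorem sproj_eq_add_sproj_sub {x w : F} (hw : ⟪x, w⟫ = 0) (v : F) :
    sproj x v = w + sproj x (v - w) := by
  simp only [sproj, inner_sub_right, hw, sub_zero]
  abel

theorem sub_mul_norm_le_inner_sproj {x a w : F} {μ D : ℝ} (hw : ⟪x, w⟫ = 0) (hμ : μ ≤ ⟪a, w⟫)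
    (hD : ‖sproj x a‖ ≤ D) (v : F) : μ - D * ‖v - w‖ ≤ ⟪a, sproj x v⟫ := by
  rw [sproj_eq_add_sproj_sub hw, inner_add_right, ← inner_sproj_left_eq_right]
  have := (abs_real_inner_le_norm (sproj x a) (v - w)).trans
    (mul_le_mul_of_nonneg_right hD (norm_nonneg _))
  linarith [neg_abs_le ⟪sproj x a, v - w⟫]

theorem norm_smul_add_apply_sproj_le {x v w : F} {L : F →L[ℝ] F} {c B ρ D₁ D₂ : ℝ}
    (hx : ‖x‖ = 1) (hw : ⟪x, w⟫ = 0) (hc : |c| ≤ B) (hvw : ‖v - w‖ ≤ ρ) (hwD : ‖w‖ ≤ D₁)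
    (hL : ‖L‖ ≤ D₂) : ‖c • (v - w) + L (sproj x v)‖ ≤ B * ρ + D₂ * (ρ + D₁) := by
  have hP : ‖sproj x v‖ ≤ ρ + D₁ := by
    rw [sproj_eq_add_sproj_sub hw]
    linarith [norm_add_le w (sproj x (v - w)), norm_sproj_le hx (v - w)]
  calc ‖c • (v - w) + L (sproj x v)‖ ≤ |c| * ‖v - w‖ + ‖L‖ * ‖sproj x v‖ := by
        rw [← Real.norm_eq_abs, ← norm_smul]
        exact (norm_add_le _ _).trans (add_le_add_right (L.le_opNorm _) _)
    _ ≤ B * ρ + D₂ * (ρ + D₁) := by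
        gcongr
        exacts [(abs_nonneg c).trans hc, (norm_nonneg L).trans hL]

end InnerProductSpace

theorem ContinuousOn.exists_forall_norm_le_of_eventually {F : Type*} [SeminormedAddGroup F]
    {f : ℝ → F} {a C : ℝ} (hf : ContinuousOn f (Ici a)) (h : ∀ᶠ t in atTop, ‖f t‖ ≤ C) :
    ∃ C', 0 < C' ∧ ∀ t, a ≤ t → ‖f t‖ ≤ C' := by
  obtain ⟨T, hT⟩ := eventually_atTop.mp h
  obtain ⟨C₀, hC₀⟩ := isCompact_Icc.exists_bound_of_continuousOn
    (hf.mono Icc_subset_Ici_self : ContinuousOn f (Icc a T))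
  refine ⟨max (max C₀ C) 1, by positivity, fun t ht => le_max_of_le_left ?_⟩
  rcases le_total t T with htT | hTt
  exacts [le_max_of_le_left (hC₀ t ⟨ht, htT⟩), le_max_of_le_right (hT t hTt)]

theorem safety_claim3_general
    (n : ℕ)
    (d : EuclideanSpace ℝ (Fin (n+1)) → ℝ)
    (ν : EuclideanSpace ℝ (Fin (n+1)) → EuclideanSpace ℝ (Fin (n+1)))
    (b : ℝ → ℝ)
    (μ D_d D₁ D₂ δ_d δ_u ε₁ k : ℝ)
    (hμ : 0 < μ) (hDd : 0 < D_d)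
    (hδd : 0 < δ_d) (hδdu : δ_d ≤ δ_u) (hε₁ : 0 < ε₁)
    (hk : 0 < k)
    (x v : ℝ → EuclideanSpace ℝ (Fin (n+1)))
    -- x and v are continuously differentiable on [0, ∞)
    (hv_smooth : ContDiffOn ℝ 1 v (Set.Ici (0:ℝ)))
    -- x evolves on the unit sphere
    (hx_sphere : ∀ t : ℝ, 0 ≤ t → ‖x t‖ = 1)
    -- closed-loop dynamics: x' = P(x) v
    (hx_ode : ∀ t : ℝ, 0 ≤ t → HasDerivAt x (sproj (x t) (v t)) t)
    -- v' = -k b(d(x)) (v - ν(x)) + Dν(x) (P(x) v)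
    (hv_ode : ∀ t : ℝ, 0 ≤ t →
      HasDerivAt v
        (-(k * b (d (x t))) • (v t - ν (x t)) +
          fderiv ℝ ν (x t) (sproj (x t) (v t))) t)
    -- (i) d continuous on the unit sphere, differentiable near the unsafe set,
    -- and chain rule along the curve
    (hd_cont : ContinuousOn d (Metric.sphere (0 : EuclideanSpace ℝ (Fin (n+1))) 1))
    (hd_chain : ∀ t : ℝ, 0 ≤ t → 0 < d (x t) → d (x t) ≤ δ_u →
      HasDerivAt (fun s => d (x s)) ⟪gradient d (x t), sproj (x t) (v t)⟫ t)
    -- (ii) bounded projected gradient near the unsafe set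
    (hgrad_bdd : ∀ y : EuclideanSpace ℝ (Fin (n+1)), ‖y‖ = 1 →
      0 < d y → d y ≤ δ_u → ‖sproj y (gradient d y)‖ ≤ D_d)
    -- (iii) the desired vector field points away from the unsafe set
    (hmove : ∀ y : EuclideanSpace ℝ (Fin (n+1)), ‖y‖ = 1 →
      0 < d y → d y ≤ δ_d → μ ≤ ⟪gradient d y, ν y⟫)
    -- (iv) ν is tangent and bounded on the free space
    (hν_tangent : ∀ y : EuclideanSpace ℝ (Fin (n+1)), ‖y‖ = 1 → 0 < d y → ⟪y, ν y⟫ = 0)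
    (hν_bdd : ∀ y : EuclideanSpace ℝ (Fin (n+1)), ‖y‖ = 1 → 0 < d y → ‖ν y‖ ≤ D₁)
    -- (v) damping profile
    (hb_eq : ∀ s : ℝ, 0 < s → s ≤ ε₁ → b s = 1 / s)
    (hb_ge_one : ∀ s : ℝ, 0 < s → 1 ≤ b s)
    -- (vi) ν differentiable along the trajectory
    (hν_diff : ∀ t : ℝ, 0 ≤ t → DifferentiableAt ℝ ν (x t))
    -- additional regularity: b continuous on (0, ∞)
    (hb_cont : ContinuousOn b (Set.Ioi (0:ℝ)))
    -- bounded Jacobian of ν away from the unsafe set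
    (hJ_bdd : ∀ y : EuclideanSpace ℝ (Fin (n+1)), ‖y‖ = 1 → δ_d ≤ d y →
      ‖fderiv ℝ ν y‖ ≤ D₂)
    -- initial condition in the free space
    (h0 : 0 < d (x 0)) :
    ∃ C : ℝ, 0 < C ∧ ∀ t : ℝ, 0 ≤ t →
      ‖-(k * b (d (x t))) • (v t - ν (x t)) +
        fderiv ℝ ν (x t) (sproj (x t) (v t))‖ ≤ C := by
  have hxS : ∀ t, 0 ≤ t → x t ∈ Metric.sphere (0 : EuclideanSpace ℝ (Fin (n+1))) 1 :=
    fun t ht => mem_sphere_zero_iff_norm.mpr (hx_sphere t ht)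
  have herr : ∀ t, 0 ≤ t → HasDerivAt (fun s => v s - ν (x s))
      (-(k * b (d (x t))) • (v t - ν (x t))) t := fun t ht =>
    ((hv_ode t ht).sub ((hν_diff t ht).hasFDerivAt.comp_hasDerivAt t (hx_ode t ht))).congr_deriv
      (by abel)
  have hsys : BarrierSystem (fun t => d (x t)) (fun t => ⟪gradient d (x t), sproj (x t) (v t)⟫)
      (fun t => ‖v t - ν (x t)‖) b k D_d μ δ_d ε₁ :=
    { k_pos := hk, D_nonneg := hDd.le, μ_pos := hμ, δ_pos := hδd, ε_pos := hε₁
      continuousOn := hd_cont.comp (fun t ht => (hx_ode t ht).continuousAt.continuousWithinAt) hxS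
      pos_zero := h0
      hasDerivAt := fun t ht hpos hle => hd_chain t ht hpos (hle.trans hδdu)
      le_deriv := fun t ht hpos hle => sub_mul_norm_le_inner_sproj
        (hν_tangent _ (hx_sphere t ht) hpos) (hmove _ (hx_sphere t ht) hpos hle)
        (hgrad_bdd _ (hx_sphere t ht) hpos (hle.trans hδdu)) (v t)
      hasDerivAt_error := fun t ht => (herr t ht).norm_of_smul_self
      error_nonneg := fun t => norm_nonneg _
      damping_eq := hb_eq
      one_le_damping := hb_ge_one }
  obtain ⟨M, hM⟩ := (isCompact_sphere (0 : EuclideanSpace ℝ (Fin (n+1))) 1).bddAbove_image hd_cont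
  obtain ⟨B, hB⟩ := isCompact_Icc.exists_bound_of_continuousOn
    (hb_cont.mono fun s hs => hδd.trans_le hs.1 : ContinuousOn b (Icc δ_d M))
  refine ContinuousOn.exists_forall_norm_le_of_eventually
    (C := k * B * ‖v 0 - ν (x 0)‖ + D₂ * (‖v 0 - ν (x 0)‖ + D₁))
    ((hv_smooth.continuousOn_derivWithin (uniqueDiffOn_Ici 0) le_rfl).congr fun t ht =>
      ((hv_ode t ht).hasDerivWithinAt.derivWithin (uniqueDiffOn_Ici 0 t ht)).symm) ?_
  filter_upwards [hsys.eventually_ge, eventually_ge_atTop 0] with t hδt ht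
  refine norm_smul_add_apply_sproj_le (hx_sphere t ht)
    (hν_tangent _ (hx_sphere t ht) (hδd.trans_le hδt)) ?_
    (hsys.error_le_error_zero_of_pos ht fun s hs => hsys.pos s hs.1)
    (hν_bdd _ (hx_sphere t ht) (hδd.trans_le hδt)) (hJ_bdd _ (hx_sphere t ht) hδt)
  rw [abs_neg, abs_mul, abs_of_pos hk]
  exact mul_le_mul_of_nonneg_left (by simpa using hB _ ⟨hδt, hM ⟨_, hxS t ht, rfl⟩⟩) hk.le

/-- Claim 3 of Lemma 1: the control input remains bounded along every
closed-loop trajectory, even though the damping gain blows up at the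
constraint boundary. -/
theorem safety_claim3
    (n : ℕ)
    (d : EuclideanSpace ℝ (Fin (n+1)) → ℝ)
    (ν : EuclideanSpace ℝ (Fin (n+1)) → EuclideanSpace ℝ (Fin (n+1)))
    (b : ℝ → ℝ)
    (μ D_d D₁ D₂ δ_d δ_u ε₁ k : ℝ)
    (hμ : 0 < μ) (hDd : 0 < D_d) (hD₁ : 0 < D₁) (hD₂ : 0 < D₂)
    (hδd : 0 < δ_d) (hδdu : δ_d ≤ δ_u) (hε₁ : 0 < ε₁) (hε₁u : ε₁ < δ_u)
    (hk : 0 < k)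
    (x v : ℝ → EuclideanSpace ℝ (Fin (n+1)))
    -- x and v are continuously differentiable on [0, ∞)
    (hx_smooth : ContDiffOn ℝ 1 x (Set.Ici (0:ℝ)))
    (hv_smooth : ContDiffOn ℝ 1 v (Set.Ici (0:ℝ)))
    -- x evolves on the unit sphere
    (hx_sphere : ∀ t : ℝ, 0 ≤ t → ‖x t‖ = 1)
    -- closed-loop dynamics: x' = P(x) v
    (hx_ode : ∀ t : ℝ, 0 ≤ t → HasDerivAt x (sproj (x t) (v t)) t)
    -- v' = -k b(d(x)) (v - ν(x)) + Dν(x) (P(x) v)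
    (hv_ode : ∀ t : ℝ, 0 ≤ t →
      HasDerivAt v
        (-(k * b (d (x t))) • (v t - ν (x t)) +
          fderiv ℝ ν (x t) (sproj (x t) (v t))) t)
    -- (i) d continuous on the unit sphere, differentiable near the unsafe set,
    -- and chain rule along the curve
    (hd_cont : ContinuousOn d (Metric.sphere (0 : EuclideanSpace ℝ (Fin (n+1))) 1))
    (hd_diff : ∀ y : EuclideanSpace ℝ (Fin (n+1)), ‖y‖ = 1 →
      0 < d y → d y ≤ δ_u → DifferentiableAt ℝ d y)
    (hd_chain : ∀ t : ℝ, 0 ≤ t → 0 < d (x t) → d (x t) ≤ δ_u →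
      HasDerivAt (fun s => d (x s)) ⟪gradient d (x t), sproj (x t) (v t)⟫ t)
    -- (ii) bounded projected gradient near the unsafe set
    (hgrad_bdd : ∀ y : EuclideanSpace ℝ (Fin (n+1)), ‖y‖ = 1 →
      0 < d y → d y ≤ δ_u → ‖sproj y (gradient d y)‖ ≤ D_d)
    -- (iii) the desired vector field points away from the unsafe set
    (hmove : ∀ y : EuclideanSpace ℝ (Fin (n+1)), ‖y‖ = 1 →
      0 < d y → d y ≤ δ_d → μ ≤ ⟪gradient d y, ν y⟫)
    -- (iv) ν is tangent and bounded on the free space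
    (hν_tangent : ∀ y : EuclideanSpace ℝ (Fin (n+1)), ‖y‖ = 1 → 0 < d y → ⟪y, ν y⟫ = 0)
    (hν_bdd : ∀ y : EuclideanSpace ℝ (Fin (n+1)), ‖y‖ = 1 → 0 < d y → ‖ν y‖ ≤ D₁)
    -- (v) damping profile
    (hb_eq : ∀ s : ℝ, 0 < s → s ≤ ε₁ → b s = 1 / s)
    (hb_ge_one : ∀ s : ℝ, 0 < s → 1 ≤ b s)
    -- (vi) ν differentiable along the trajectory
    (hν_diff : ∀ t : ℝ, 0 ≤ t → DifferentiableAt ℝ ν (x t))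
    -- additional regularity: b continuous on (0, ∞)
    (hb_cont : ContinuousOn b (Set.Ioi (0:ℝ)))
    -- ν continuously differentiable on the free part of the sphere
    (hν_smooth : ContDiffOn ℝ 1 ν {y : EuclideanSpace ℝ (Fin (n+1)) | ‖y‖ = 1 ∧ 0 < d y})
    -- bounded Jacobian of ν away from the unsafe set
    (hJ_bdd : ∀ y : EuclideanSpace ℝ (Fin (n+1)), ‖y‖ = 1 → δ_d ≤ d y →
      ‖fderiv ℝ ν y‖ ≤ D₂)
    -- initial condition in the free space
    (h0 : 0 < d (x 0)) :
    ∃ C : ℝ, 0 < C ∧ ∀ t : ℝ, 0 ≤ t →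
      ‖-(k * b (d (x t))) • (v t - ν (x t)) +
        fderiv ℝ ν (x t) (sproj (x t) (v t))‖ ≤ C :=
  safety_claim3_general n d ν b μ D_d D₁ D₂ δ_d δ_u ε₁ k hμ hDd hδd hδdu hε₁ hk x v hv_smooth
    hx_sphere hx_ode hv_ode hd_cont hd_chain hgrad_bdd hmove hν_tangent hν_bdd hb_eq hb_ge_one
    hν_diff hb_cont hJ_bdd h0
end

section
/- Let ν : E → E be differentiable, let b : ℝ → ℝ be any function of time, let k ∈ ℝ, and let x, v : ℝ → E be curves such that at every t, x has derivative x'(t) = P(x(t)) v(t) and v has derivative v'(t) = -(k · b(t)) • (v(t) - ν(x(t))) + (Dν(x(t)))(P(x(t)) v(t)), where Dν(x(t)) is the Fréchet derivative of ν at x(t). Then the error curve z(t) := v(t) - ν(x(t)) is differentiable at every t with derivative z'(t) = -(k · b(t)) • z(t). In particular, the function V(t) = ½‖z(t)‖² satisfies V'(t) = -k·b(t)·‖z(t)‖². -/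
/-!
By the chain rule `(ν ∘ x)' = Dν(x) x' = Dν(x) (P(x) v)`, which is exactly the feed-forward term
of `v'`; it cancels in `z' = v' - (ν ∘ x)'`, leaving `z' = -(k b) z`. Then
`(½‖z‖²)' = ⟪z, z'⟫ = -k b ‖z‖²`.
-/

open scoped RealInnerProductSpace

section

variable {E F : Type*} [NormedAddCommGroup E] [NormedSpace ℝ E]
  [NormedAddCommGroup F] [NormedSpace ℝ F]

theorem HasDerivAt.sub_comp_of_add_fderiv {ν : E → F} {x : ℝ → E} {v : ℝ → F} {x' : E} {a : F}
    {t : ℝ} (hv : HasDerivAt v (a + fderiv ℝ ν (x t) x') t) (hν : DifferentiableAt ℝ ν (x t))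
    (hx : HasDerivAt x x' t) :
    HasDerivAt (fun s => v s - ν (x s)) a t := by
  have := hv.sub (hν.hasFDerivAt.comp_hasDerivAt t hx)
  rwa [add_sub_cancel_right] at this

end

theorem HasDerivAt.half_norm_sq_of_eq_smul {F : Type*} [NormedAddCommGroup F]
    [InnerProductSpace ℝ F] {z : ℝ → F} {c t : ℝ} (hz : HasDerivAt z (c • z t) t) :
    HasDerivAt (fun s => (1 / 2 : ℝ) * ‖z s‖ ^ 2) (c * ‖z t‖ ^ 2) t := by
  have hV : (1 / 2 : ℝ) * (2 * ⟪z t, c • z t⟫) = c * ‖z t‖ ^ 2 := by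
    rw [real_inner_smul_right, real_inner_self_eq_norm_sq]
    ring
  exact hV ▸ hz.norm_sq.const_mul (1 / 2 : ℝ)

/-- The error-dynamics identity behind the dynamic-damping control law:
along the closed loop, the error `z = v - ν(x)` satisfies `z' = -(k b(t)) z`,
and `V = ½‖z‖²` satisfies `V' = -k b(t) ‖z‖²`. -/
theorem error_dynamics
    (n : ℕ)
    (ν : EuclideanSpace ℝ (Fin (n+1)) → EuclideanSpace ℝ (Fin (n+1)))
    (hν : Differentiable ℝ ν)
    (b : ℝ → ℝ) (k : ℝ)
    (x v : ℝ → EuclideanSpace ℝ (Fin (n+1)))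
    (hx : ∀ t : ℝ, HasDerivAt x (sproj (x t) (v t)) t)
    (hv : ∀ t : ℝ, HasDerivAt v
      (-(k * b t) • (v t - ν (x t)) + fderiv ℝ ν (x t) (sproj (x t) (v t))) t) :
    (∀ t : ℝ, HasDerivAt (fun s => v s - ν (x s))
      (-(k * b t) • (v t - ν (x t))) t) ∧
    (∀ t : ℝ, HasDerivAt (fun s => (1/2 : ℝ) * ‖v s - ν (x s)‖^2)
      (-(k * b t) * ‖v t - ν (x t)‖^2) t) := by
  have hz : ∀ t, HasDerivAt (fun s => v s - ν (x s)) (-(k * b t) • (v t - ν (x t))) t :=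
    fun t => (hv t).sub_comp_of_add_fderiv (hν (x t)) (hx t)
  exact ⟨hz, fun t => (hz t).half_norm_sq_of_eq_smul⟩
end

section
/- Let a, b ∈ E with ‖a‖ = ‖b‖ = 1, b ≠ a and b ≠ -a, set θ := arccos ⟪a, b⟫ ∈ (0, π), and define g : ℝ → E by g(λ) = (sin((1-λ)θ)/sin θ) • a + (sin(λθ)/sin θ) • b. Then g is twice differentiable on ℝ with second derivative g''(λ) = -θ² • g(λ) for every λ; consequently P(g(λ)) g''(λ) = 0 for every λ, i.e. the acceleration of g has no component tangent to the sphere, so g satisfies the geodesic equation on S^n. -/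
open scoped RealInnerProductSpace

/-!
Both coefficients of the slerp curve solve `y'' = -θ² y`, so `g'' = -θ² g` is a multiple of `g`.
Writing `α = (1 - λ)θ`, `β = λθ` and using `⟪a, b⟫ = cos θ`, the identity
`sin² α + 2 sin α sin β cos (α + β) + sin² β = sin² (α + β)` shows that `g` stays on the unit
sphere, and the projection `P(x)` kills multiples of a unit vector `x`.
-/

open Real InnerProductGeometry

theorem sin_sq_add_two_mul_sin_mul_sin_mul_cos_add_add_sin_sq (α β : ℝ) :
    sin α ^ 2 + 2 * sin α * sin β * cos (α + β) + sin β ^ 2 = sin (α + β) ^ 2 := by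
  rw [sin_add, cos_add]
  linear_combination (-sin α ^ 2) * sin_sq_add_cos_sq β - sin β ^ 2 * sin_sq_add_cos_sq α

section

variable {F : Type*} [NormedAddCommGroup F] [InnerProductSpace ℝ F]

theorem sproj_smul_self_of_norm_eq_one {x : F} (hx : ‖x‖ = 1) (c : ℝ) : sproj x (c • x) = 0 := by
  simp [sproj, real_inner_smul_right, hx]

theorem arccos_inner_eq_angle_of_norm_eq_one {a b : F} (ha : ‖a‖ = 1) (hb : ‖b‖ = 1) :
    arccos ⟪a, b⟫ = angle a b := by
  simp [angle, ha, hb]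

theorem sin_angle_ne_zero_of_norm_eq {a b : F} (h : ‖a‖ = ‖b‖) (hne : b ≠ a) (hne' : b ≠ -a) :
    sin (angle a b) ≠ 0 := by
  rw [Ne, sin_eq_zero_iff_angle_eq_zero_or_angle_eq_pi]
  rintro (h0 | hπ)
  · exact hne (eq_of_angle_eq_zero_of_norm_eq h0 h).symm
  · have h0 : angle a (-b) = 0 := by rw [angle_neg_right, hπ, sub_self]
    have hab : a = -b := eq_of_angle_eq_zero_of_norm_eq h0 (h.trans (norm_neg b).symm)
    exact hne' (neg_eq_iff_eq_neg.mp hab.symm)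

noncomputable def slerp (a b : F) (θ l : ℝ) : F :=
  (sin ((1 - l) * θ) / sin θ) • a + (sin (l * θ) / sin θ) • b

noncomputable def slerpDeriv (a b : F) (θ l : ℝ) : F :=
  (-θ * cos ((1 - l) * θ) / sin θ) • a + (θ * cos (l * θ) / sin θ) • b

theorem hasDerivAt_slerp (a b : F) (θ l : ℝ) : HasDerivAt (slerp a b θ) (slerpDeriv a b θ l) l := by
  have hα := (((hasDerivAt_id' l).const_sub 1).mul_const θ).sin
  have hβ := ((hasDerivAt_id' l).mul_const θ).sin
  refine (((hα.div_const (sin θ)).smul_const a).add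
    ((hβ.div_const (sin θ)).smul_const b)).congr_deriv ?_
  rw [slerpDeriv]
  module

theorem hasDerivAt_slerpDeriv (a b : F) (θ l : ℝ) :
    HasDerivAt (slerpDeriv a b θ) (-(θ ^ 2) • slerp a b θ l) l := by
  have hα := ((((hasDerivAt_id' l).const_sub 1).mul_const θ).cos).const_mul (-θ)
  have hβ := (((hasDerivAt_id' l).mul_const θ).cos).const_mul θ
  refine (((hα.div_const (sin θ)).smul_const a).add
    ((hβ.div_const (sin θ)).smul_const b)).congr_deriv ?_
  rw [slerp]
  module

theorem norm_slerp {a b : F} {θ : ℝ} (ha : ‖a‖ = 1) (hb : ‖b‖ = 1) (hab : ⟪a, b⟫ = cos θ)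
    (hθ : sin θ ≠ 0) (l : ℝ) : ‖slerp a b θ l‖ = 1 := by
  have hsq := sin_sq_add_two_mul_sin_mul_sin_mul_cos_add_add_sin_sq ((1 - l) * θ) (l * θ)
  rw [show (1 - l) * θ + l * θ = θ by ring] at hsq
  rw [← pow_eq_one_iff_of_nonneg (norm_nonneg _) two_ne_zero, slerp, norm_add_sq_real]
  simp only [norm_smul, real_inner_smul_left, real_inner_smul_right, ha, hb, hab, mul_pow,
    Real.norm_eq_abs, sq_abs]
  field_simp
  linear_combination hsq

end

/-- Section II of the paper: the slerp curve `g` satisfies the geodesic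
equation on the sphere: it is twice differentiable with `g'' = -θ² g`, so
`P(g(λ)) g''(λ) = 0` for all `λ`. -/
theorem slerp_is_geodesic
    (n : ℕ)
    (a b : EuclideanSpace ℝ (Fin (n+1)))
    (ha : ‖a‖ = 1) (hb : ‖b‖ = 1)
    (hne : b ≠ a) (hne' : b ≠ -a)
    (θ : ℝ) (hθ : θ = Real.arccos ⟪a, b⟫)
    (g : ℝ → EuclideanSpace ℝ (Fin (n+1)))
    (hg : g = fun l =>
      (Real.sin ((1 - l) * θ) / Real.sin θ) • a +
        (Real.sin (l * θ) / Real.sin θ) • b) :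
    ∃ g' : ℝ → EuclideanSpace ℝ (Fin (n+1)),
      (∀ l : ℝ, HasDerivAt g (g' l) l) ∧
      (∀ l : ℝ, HasDerivAt g' (-(θ^2) • g l) l) ∧
      (∀ l : ℝ, sproj (g l) (-(θ^2) • g l) = 0) := by
  rw [arccos_inner_eq_angle_of_norm_eq_one ha hb] at hθ
  have hcos : ⟪a, b⟫ = cos θ := by simp [hθ, cos_angle, ha, hb]
  have hsin : sin θ ≠ 0 := hθ ▸ sin_angle_ne_zero_of_norm_eq (ha.trans hb.symm) hne hne'
  subst hg
  exact ⟨slerpDeriv a b θ, hasDerivAt_slerp a b θ, hasDerivAt_slerpDeriv a b θ,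
    fun l => sproj_smul_self_of_norm_eq_one (norm_slerp ha hb hcos hsin l) _⟩
end

section
/- Let E be a real inner product space of dimension n+1, let x ∈ E with ‖x‖ = 1, let P : E → E be P v = v - ⟪x,v⟫·x, let J : E → E be linear, and let c > 0. Define the linear operator L : E × E → E × E by L(n₁, n₂) = (P n₂, c • (J n₁) + J (P n₂) - c • n₂). Then for every n₂ ∈ E, the vector (-(1/c) • P n₂, n₂) satisfies L(-(1/c) • P n₂, n₂) = (-c) • (-(1/c) • P n₂, n₂); moreover the map n₂ ↦ (-(1/c) • P n₂, n₂) is an injective linear map from E into the eigenspace of L for the eigenvalue -c, so that eigenspace has dimension at least n+1. -/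
open scoped RealInnerProductSpace

section DampingBlock

variable {K M : Type*} [Field K] [AddCommGroup M] [Module K M]

/-- Choosing `n₁ = -(1/c) P n₂` makes `c J n₁` cancel `J (P n₂)`. -/
theorem damping_block_eigenvector (P : M → M) (J : M →ₗ[K] M) {c : K} (hc : c ≠ 0)
    (L : Module.End K (M × M))
    (hL : ∀ p : M × M, L p = (P p.2, c • J p.1 + J (P p.2) - c • p.2)) (v : M) :
    L ((-(1/c)) • P v, v) = (-c) • ((-(1/c)) • P v, v) := by
  have hcancel : c • J ((-(1/c)) • P v) = -J (P v) := by
    rw [map_smul, smul_smul, mul_neg, mul_one_div_cancel hc, neg_one_smul]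
  rw [hL]
  ext
  · simp only [Prod.smul_fst, smul_smul, neg_mul_neg, mul_one_div_cancel hc, one_smul]
  · simp only [Prod.smul_snd, hcancel]
    module

def dampingEmbedding (c : K) (P : M →ₗ[K] M) : M →ₗ[K] M × M :=
  LinearMap.prod ((-(1/c)) • P) LinearMap.id

theorem dampingEmbedding_injective (c : K) (P : M →ₗ[K] M) :
    Function.Injective (dampingEmbedding c P) :=
  fun _ _ h => congrArg Prod.snd h

end DampingBlock

theorem Module.End.finrank_le_finrank_eigenspace_of_injective {K V W : Type*} [Field K]
    [AddCommGroup V] [Module K V] [AddCommGroup W] [Module K W] {f : Module.End K V} {μ : K}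
    [FiniteDimensional K (f.eigenspace μ)] (g : W →ₗ[K] V) (hg : Function.Injective g)
    (hmem : ∀ w, g w ∈ f.eigenspace μ) :
    Module.finrank K W ≤ Module.finrank K (f.eigenspace μ) :=
  LinearMap.finrank_le_finrank_of_injective (f := g.codRestrict _ hmem)
    fun _ _ h => hg (congrArg Subtype.val h)

noncomputable def sprojₗ {F : Type*} [NormedAddCommGroup F] [InnerProductSpace ℝ F] (x : F) :
    F →ₗ[ℝ] F :=
  LinearMap.id - (innerₛₗ ℝ x).smulRight x

theorem damping_eigenvalue_multiplicity_general
    (n : ℕ)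
    (E : Type*) [NormedAddCommGroup E] [InnerProductSpace ℝ E]
    (hdim : Module.finrank ℝ E = n + 1)
    (x : E)
    (J : E →ₗ[ℝ] E) (c : ℝ) (hc : 0 < c)
    (L : Module.End ℝ (E × E))
    (hL : ∀ p : E × E,
      L p = (sproj x p.2, c • J p.1 + J (sproj x p.2) - c • p.2)) :
    (∀ n₂ : E,
      L ((-(1/c)) • sproj x n₂, n₂) = (-c) • ((-(1/c)) • sproj x n₂, n₂)) ∧
    (∀ n₂ : E,
      ((-(1/c)) • sproj x n₂, n₂) ∈ Module.End.eigenspace L (-c)) ∧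
    Function.Injective (fun n₂ : E => ((-(1/c)) • sproj x n₂, n₂)) ∧
    n + 1 ≤ Module.finrank ℝ (Module.End.eigenspace L (-c)) := by
  have : FiniteDimensional ℝ E := Module.finite_of_finrank_eq_succ hdim
  have heigen := damping_block_eigenvector (sproj x) J hc.ne' L hL
  have hmem : ∀ v, ((-(1/c)) • sproj x v, v) ∈ L.eigenspace (-c) :=
    fun v => Module.End.mem_eigenspace_iff.2 (heigen v)
  refine ⟨heigen, hmem, dampingEmbedding_injective c (sprojₗ x), hdim ▸ ?_⟩
  exact Module.End.finrank_le_finrank_eigenspace_of_injective (dampingEmbedding c (sprojₗ x))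
    (dampingEmbedding_injective c (sprojₗ x)) hmem

/-- From the proof of Theorem 1 of the paper: for the linearization
`L(n₁, n₂) = (P n₂, c J n₁ + J (P n₂) - c n₂)` of the closed loop at an
equilibrium, every vector `(-(1/c) P n₂, n₂)` is an eigenvector for the
eigenvalue `-c`; the map `n₂ ↦ (-(1/c) P n₂, n₂)` is injective and linear
into that eigenspace, so the eigenspace of `-c` has dimension at least
`n + 1`. -/
theorem damping_eigenvalue_multiplicity
    (n : ℕ)
    (E : Type*) [NormedAddCommGroup E] [InnerProductSpace ℝ E]
    [FiniteDimensional ℝ E]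
    (hdim : Module.finrank ℝ E = n + 1)
    (x : E) (hx : ‖x‖ = 1)
    (J : E →ₗ[ℝ] E) (c : ℝ) (hc : 0 < c)
    (L : Module.End ℝ (E × E))
    (hL : ∀ p : E × E,
      L p = (sproj x p.2, c • J p.1 + J (sproj x p.2) - c • p.2)) :
    (∀ n₂ : E,
      L ((-(1/c)) • sproj x n₂, n₂) = (-c) • ((-(1/c)) • sproj x n₂, n₂)) ∧
    (∀ n₂ : E,
      ((-(1/c)) • sproj x n₂, n₂) ∈ Module.End.eigenspace L (-c)) ∧
    Function.Injective (fun n₂ : E => ((-(1/c)) • sproj x n₂, n₂)) ∧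
    n + 1 ≤ Module.finrank ℝ (Module.End.eigenspace L (-c)) :=
  damping_eigenvalue_multiplicity_general n E hdim x J c hc L hL
end

section
/- Let E be a real inner product space, let x ∈ E with ‖x‖ = 1, let P : E → E be P v = v - ⟪x,v⟫·x, let J : E → E be linear, and let c > 0. Define L : E × E → E × E by L(n₁, n₂) = (P n₂, c • (J n₁) + J (P n₂) - c • n₂). Suppose λ ∈ ℝ with λ ≠ 0, and n₂ ∈ E with n₂ ≠ 0, ⟪x, n₂⟫ = 0, and J n₂ = λ • n₂. Then L((1/λ) • n₂, n₂) = λ • ((1/λ) • n₂, n₂); that is, every nonzero eigenvalue of J whose eigenvector lies in the tangent space at x is also an eigenvalue of L, with eigenvector ((1/λ) n₂, n₂). -/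
open scoped RealInnerProductSpace

theorem sproj_eq_self_of_inner_eq_zero {F : Type*} [NormedAddCommGroup F]
    [InnerProductSpace ℝ F] {x v : F} (h : ⟪x, v⟫ = 0) : sproj x v = v := by
  simp [sproj, h]

theorem LinearMap.map_inv_smul_of_apply_eq_smul {K M : Type*} [Field K] [AddCommGroup M]
    [Module K M] (J : M →ₗ[K] M) {lam : K} (hlam : lam ≠ 0) {v : M} (h : J v = lam • v) :
    J (lam⁻¹ • v) = v := by
  rw [map_smul, h, inv_smul_smul₀ hlam]

theorem eigenvalue_lifting_general
    (E : Type*) [NormedAddCommGroup E] [InnerProductSpace ℝ E]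
    (x : E)
    (J : E →ₗ[ℝ] E) (c : ℝ)
    (L : Module.End ℝ (E × E))
    (hL : ∀ p : E × E,
      L p = (sproj x p.2, c • J p.1 + J (sproj x p.2) - c • p.2))
    (lam : ℝ) (hlam : lam ≠ 0)
    (n₂ : E)
    (htangent : ⟪x, n₂⟫ = 0)
    (heig : J n₂ = lam • n₂) :
    L ((1/lam) • n₂, n₂) = lam • ((1/lam) • n₂, n₂) := by
  rw [hL, sproj_eq_self_of_inner_eq_zero htangent, one_div,
    J.map_inv_smul_of_apply_eq_smul hlam heig, heig, Prod.smul_mk, smul_inv_smul₀ hlam,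
    add_sub_cancel_left]

/-- From the proof of Theorem 1 of the paper: every nonzero eigenvalue `λ` of
`J` whose eigenvector `n₂` lies in the tangent space at `x` is also an
eigenvalue of the linearization
`L(n₁, n₂) = (P n₂, c J n₁ + J (P n₂) - c n₂)`, with eigenvector
`((1/λ) n₂, n₂)`. -/
theorem eigenvalue_lifting
    (E : Type*) [NormedAddCommGroup E] [InnerProductSpace ℝ E]
    (x : E) (hx : ‖x‖ = 1)
    (J : E →ₗ[ℝ] E) (c : ℝ) (hc : 0 < c)
    (L : Module.End ℝ (E × E))
    (hL : ∀ p : E × E,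
      L p = (sproj x p.2, c • J p.1 + J (sproj x p.2) - c • p.2))
    (lam : ℝ) (hlam : lam ≠ 0)
    (n₂ : E) (hn₂ : n₂ ≠ 0)
    (htangent : ⟪x, n₂⟫ = 0)
    (heig : J n₂ = lam • n₂) :
    L ((1/lam) • n₂, n₂) = lam • ((1/lam) • n₂, n₂) :=
  eigenvalue_lifting_general E x J c L hL lam hlam n₂ htangent heig
end
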